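/- arXiv:1106.0871 — 5 statements merged into one kernel-verified Lean document; each statement's English description precedes it below -/
import Mathlib

section
/- There exists an absolute constant C > 0 such that for every N ≥ 1, every real-valued orthonormal system {φ_n}_{n=1}^N on 𝕋 = [0,1], and all real coefficients a_1, …, a_N, the function f = ∑_{n=1}^N a_n φ_n satisfies ‖S[f]‖_{L²(V²)} ≤ C (∑_{n=1}^N a_n² ln²(n+1))^{1/2}, where ln denotes the natural logarithm. -/
open MeasureTheory

/-- The square variation norm of the finite sequence `a 1, …, a N`:
the supremum over all partitions of `{1, …, N}` into consecutive intervals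
(given by cut points `0 = c 0 < c 1 < ⋯ < c m = N`) of
`( ∑_j ( ∑_{n ∈ (c j, c (j+1)]} a n )² )^{1/2}`. -/
noncomputable def sqVar (N : ℕ) (a : ℕ → ℝ) : ℝ :=
  sSup { r : ℝ | ∃ (m : ℕ) (c : ℕ → ℕ), StrictMono c ∧ c 0 = 0 ∧ c m = N ∧
    r = Real.sqrt (∑ j ∈ Finset.range m,
      (∑ n ∈ Finset.Ioc (c j) (c (j + 1)), a n) ^ 2) }

/-!
Pointwise in `x`, every partition sum of `g n = a n * φ n x` is bounded by one fixed majorant, a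
nonnegative combination of squares `(∑ n ∈ I, g n) ^ 2` over intervals `I ⊆ (0, N]`, and
orthonormality integrates each such square to `∑ n ∈ I, a n ^ 2`.

Cut `(0, N]` into the blocks `2^k ≤ n < 2^(k+1)`. A partition interval consists of whole blocks,
handled by Cauchy–Schwarz with weights `(k + 1)^2` (as `∑ 1 / (k + 1)^2 ≤ 2`), and at most two
partial pieces. Inside block `k` the partial pieces of all the partition intervals are controlled
by the Rademacher–Menshov chaining: writing both endpoints of a piece in binary, the piece is a
difference of at most `2 (k + 1)` dyadic intervals, and each dyadic interval occurs for at most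
two pieces; Cauchy–Schwarz over the `k + 1` levels costs a factor `k + 1`, and each level of the
dyadic energy integrates to the `a n ^ 2`-mass of the block. Both contributions weight `a n ^ 2` by
`O((k + 1)^2) = O(log (n + 1) ^ 2)`.
-/

namespace RademacherMenshov

open Finset

theorem sum_range_sum_Ioc {M : Type*} [AddCommMonoid M] {s : ℕ → ℕ} (hs : Monotone s)
    (f : ℕ → M) (R : ℕ) :
    ∑ k ∈ range R, ∑ n ∈ Ioc (s k) (s (k + 1)), f n = ∑ n ∈ Ioc (s 0) (s R), f n := by
  induction R with
  | zero => simp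
  | succ R ih =>
    rw [sum_range_succ, ih, sum_Ioc_consecutive _ (hs R.zero_le) (hs R.le_succ)]

theorem card_filter_mem_Ioc_le_one {s : ℕ → ℕ} (hs : Monotone s) (x : ℕ) (T : Finset ℕ) :
    #{k ∈ T | x ∈ Ioc (s k) (s (k + 1))} ≤ 1 := by
  refine card_le_one.2 fun k hk k' hk' => ?_
  simp only [mem_filter, mem_Ioc] at hk hk'
  by_contra hne
  rcases Nat.lt_or_gt_of_ne hne with h | h
  · have := hs (show k + 1 ≤ k' by omega); omega
  · have := hs (show k' + 1 ≤ k by omega); omega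

theorem sum_Ioc_sub_sum_Ioc {M : Type*} [AddCommGroup M] (g : ℕ → M) {p a b : ℕ} (hpa : p ≤ a)
    (hab : a ≤ b) :
    ∑ n ∈ Ioc p b, g n - ∑ n ∈ Ioc p a, g n = ∑ n ∈ Ioc a b, g n := by
  rw [← sum_Ioc_consecutive g hpa hab, add_sub_cancel_left]

def dyadicSum (g : ℕ → ℝ) (p l u : ℕ) : ℝ :=
  ∑ n ∈ Ioc (p + (u - 1) * 2 ^ l) (p + u * 2 ^ l), g n

theorem div_two_pow_succ_mul (t l : ℕ) :
    t / 2 ^ (l + 1) * 2 ^ (l + 1) =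
      if Odd (t / 2 ^ l) then (t / 2 ^ l - 1) * 2 ^ l else t / 2 ^ l * 2 ^ l := by
  rw [pow_succ, ← Nat.div_div_eq_div_mul, ← mul_assoc, mul_right_comm]
  set u := t / 2 ^ l
  split_ifs with hu
  · have := Nat.div_two_mul_two_add_one_of_odd hu
    rw [show u / 2 * 2 = u - 1 by omega]
  · rw [Nat.div_two_mul_two_of_even (Nat.not_odd_iff_even.1 hu)]

theorem sum_Ioc_eq_sum_dyadicSum (g : ℕ → ℝ) (p : ℕ) {t K : ℕ} (ht : t < 2 ^ (K + 1)) :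
    ∑ n ∈ Ioc p (p + t), g n =
      ∑ l ∈ range (K + 1), if Odd (t / 2 ^ l) then dyadicSum g p l (t / 2 ^ l) else 0 := by
  set P : ℕ → ℝ := fun l => ∑ n ∈ Ioc p (p + t / 2 ^ l * 2 ^ l), g n
  have hstep : ∀ l,
      (if Odd (t / 2 ^ l) then dyadicSum g p l (t / 2 ^ l) else 0) = P l - P (l + 1) := by
    intro l
    simp only [P, div_two_pow_succ_mul]
    split_ifs
    · rw [sum_Ioc_sub_sum_Ioc g (Nat.le_add_right _ _)
        (Nat.add_le_add_left (Nat.mul_le_mul_right _ (Nat.sub_le _ _)) _)]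
      rfl
    · rw [sub_self]
  rw [sum_congr rfl fun l _ => hstep l, sum_range_sub']
  simp [P, Nat.div_eq_of_lt ht]

theorem sq_sum_Ioc_le (g : ℕ → ℝ) (p : ℕ) {a b K : ℕ} (hab : a ≤ b) (hb : b < 2 ^ (K + 1)) :
    (∑ n ∈ Ioc (p + a) (p + b), g n) ^ 2 ≤
      2 * (K + 1) * ∑ l ∈ range (K + 1), if a / 2 ^ l < b / 2 ^ l then
        dyadicSum g p l (b / 2 ^ l) ^ 2 + dyadicSum g p l (a / 2 ^ l) ^ 2 else 0 := by
  set τ : ℕ → ℕ → ℝ := fun l u => if Odd u then dyadicSum g p l u else 0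
  have hτ : ∀ l u, τ l u ^ 2 ≤ dyadicSum g p l u ^ 2 := by
    intro l u
    simp only [τ]
    split_ifs <;> simp [sq_nonneg]
  have hsum : ∑ n ∈ Ioc (p + a) (p + b), g n =
      ∑ l ∈ range (K + 1), (τ l (b / 2 ^ l) - τ l (a / 2 ^ l)) := by
    rw [← sum_Ioc_sub_sum_Ioc g (Nat.le_add_right p a) (Nat.add_le_add_left hab p),
      sum_Ioc_eq_sum_dyadicSum g p hb, sum_Ioc_eq_sum_dyadicSum g p (hab.trans_lt hb),
      sum_sub_distrib]
  have hterm : ∀ l, (τ l (b / 2 ^ l) - τ l (a / 2 ^ l)) ^ 2 ≤ 2 * (if a / 2 ^ l < b / 2 ^ l then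
      dyadicSum g p l (b / 2 ^ l) ^ 2 + dyadicSum g p l (a / 2 ^ l) ^ 2 else 0) := by
    intro l
    split_ifs with h
    · nlinarith [hτ l (b / 2 ^ l), hτ l (a / 2 ^ l), sq_nonneg (τ l (b / 2 ^ l) + τ l (a / 2 ^ l))]
    · rw [le_antisymm (Nat.div_le_div_right hab) (not_lt.1 h)]
      simp
  rw [hsum]
  calc _ ≤ (#(range (K + 1)) : ℝ) * ∑ l ∈ range (K + 1), (τ l (b / 2 ^ l) - τ l (a / 2 ^ l)) ^ 2 :=
        sq_sum_le_card_mul_sum_sq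
    _ ≤ (K + 1) * ∑ l ∈ range (K + 1), 2 * (if a / 2 ^ l < b / 2 ^ l then
          dyadicSum g p l (b / 2 ^ l) ^ 2 + dyadicSum g p l (a / 2 ^ l) ^ 2 else 0) := by
        rw [card_range, Nat.cast_add_one]
        exact mul_le_mul_of_nonneg_left (sum_le_sum fun l _ => hterm l) (by positivity)
    _ = _ := by rw [← mul_sum]; ring

/-- Along a monotone sequence `u ≤ U`, each value is the lower end of at most one strict ascent
and the upper end of at most one. -/
theorem sum_ascents_le {u : ℕ → ℕ} (hu : Monotone u) {m U : ℕ} (hU : u m ≤ U) {G : ℕ → ℝ}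
    (hG : ∀ v, 0 ≤ G v) :
    ∑ j ∈ range m, (if u j < u (j + 1) then G (u (j + 1)) + G (u j) else 0) ≤
      2 * ∑ v ∈ range (U + 1), G v := by
  set J := {j ∈ range m | u j < u (j + 1)}
  have hJ : ∀ j ∈ J, j + 1 ≤ m ∧ u j < u (j + 1) := fun j hj => by
    simpa [J, Nat.succ_le_iff] using hj
  have hle : ∀ e : ℕ → ℕ, StrictMonoOn e J → (∀ j ∈ J, e j ≤ u m) →
      ∑ j ∈ J, G (e j) ≤ ∑ v ∈ range (U + 1), G v := by
    intro e he hmaps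
    rw [← sum_image he.injOn]
    refine sum_le_sum_of_subset_of_nonneg (fun v hv => ?_) fun v _ _ => hG v
    obtain ⟨j, hj, rfl⟩ := mem_image.1 hv
    exact mem_range.2 (Nat.lt_succ_of_le ((hmaps j hj).trans hU))
  have hnext : StrictMonoOn (fun j => u (j + 1)) J := fun j _ j' hj' h =>
    (hu (show j + 1 ≤ j' by omega)).trans_lt (hJ j' hj').2
  have hcur : StrictMonoOn u J := fun j hj j' _ h =>
    (hJ j hj).2.trans_le (hu (show j + 1 ≤ j' by omega))
  rw [← sum_filter, sum_add_distrib, two_mul]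
  exact add_le_add (hle _ hnext fun j hj => hu (hJ j hj).1)
    (hle _ hcur fun j hj => hu (by linarith [(hJ j hj).1]))

/-- `F a b` is a quantity attached to the interval `(a, b]`; the term `u = 0` is the empty
interval `(p, p]`. -/
def dyadicEnergy (F : ℕ → ℕ → ℝ) (p L K : ℕ) : ℝ :=
  ∑ l ∈ range (K + 1), ∑ u ∈ range (L / 2 ^ l + 1), F (p + (u - 1) * 2 ^ l) (p + u * 2 ^ l)

theorem sum_sq_le_dyadicEnergy (g : ℕ → ℝ) (p : ℕ) {t : ℕ → ℕ} (ht : Monotone t) {m L K : ℕ}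
    (hm : t m ≤ L) (hL : L < 2 ^ (K + 1)) :
    ∑ j ∈ range m, (∑ n ∈ Ioc (p + t j) (p + t (j + 1)), g n) ^ 2 ≤
      4 * (K + 1) * dyadicEnergy (fun a b => (∑ n ∈ Ioc a b, g n) ^ 2) p L K := by
  calc _ ≤ ∑ j ∈ range m, 2 * (K + 1) * ∑ l ∈ range (K + 1),
          if t j / 2 ^ l < t (j + 1) / 2 ^ l then
            dyadicSum g p l (t (j + 1) / 2 ^ l) ^ 2 + dyadicSum g p l (t j / 2 ^ l) ^ 2 else 0 :=
        sum_le_sum fun j hj => sq_sum_Ioc_le g p (ht j.le_succ)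
          (((ht (Nat.succ_le_of_lt (mem_range.1 hj))).trans hm).trans_lt hL)
    _ = 2 * (K + 1) * ∑ l ∈ range (K + 1), ∑ j ∈ range m,
          if t j / 2 ^ l < t (j + 1) / 2 ^ l then
            dyadicSum g p l (t (j + 1) / 2 ^ l) ^ 2 + dyadicSum g p l (t j / 2 ^ l) ^ 2 else 0 := by
        rw [← mul_sum, sum_comm]
    _ ≤ 2 * (K + 1) * ∑ l ∈ range (K + 1),
          2 * ∑ u ∈ range (L / 2 ^ l + 1), dyadicSum g p l u ^ 2 := by
        gcongr with l
        exact sum_ascents_le (fun i j h => Nat.div_le_div_right (ht h)) (Nat.div_le_div_right hm)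
          fun v => sq_nonneg _
    _ = _ := by rw [dyadicEnergy, ← mul_sum]; simp only [dyadicSum]; ring

theorem sum_range_sum_inter_Ioc {M : Type*} [AddCommMonoid M] {s : ℕ → ℕ} (hs : Monotone s)
    (f : ℕ → M) {J : Finset ℕ} {R : ℕ} (hJ : J ⊆ Ioc (s 0) (s R)) :
    ∑ k ∈ range R, ∑ n ∈ J ∩ Ioc (s k) (s (k + 1)), f n = ∑ n ∈ J, f n := by
  simp_rw [inter_comm J, ← sum_ite_mem]
  rw [sum_range_sum_Ioc hs, sum_ite_mem, inter_eq_right.2 hJ]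

theorem Ioc_inter_Ioc_eq_Ioc_add (a b p q : ℕ) :
    Ioc a b ∩ Ioc p q = Ioc (p + min (a - p) (q - p)) (p + min (b - p) (q - p)) := by
  ext n
  simp only [mem_inter, mem_Ioc]
  omega

theorem sum_sq_inter_le_dyadicEnergy (g : ℕ → ℝ) {c : ℕ → ℕ} (hc : Monotone c) (m : ℕ)
    {p q K : ℕ} (hK : q - p < 2 ^ (K + 1)) :
    ∑ j ∈ range m, (∑ n ∈ Ioc (c j) (c (j + 1)) ∩ Ioc p q, g n) ^ 2 ≤
      4 * (K + 1) * dyadicEnergy (fun a b => (∑ n ∈ Ioc a b, g n) ^ 2) p (q - p) K := by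
  simp only [Ioc_inter_Ioc_eq_Ioc_add]
  exact sum_sq_le_dyadicEnergy g p
    (fun i j h => min_le_min_right _ (Nat.sub_le_sub_right (hc h) p)) (min_le_right _ _) hK

theorem sum_range_inv_succ_sq_le (R : ℕ) : ∑ k ∈ range R, (((k : ℝ) + 1) ^ 2)⁻¹ ≤ 2 := by
  have := sum_Ioo_inv_sq_le (α := ℝ) 0 (R + 1)
  rw [← Ico_add_one_left_eq_Ioo, sum_Ico_eq_sum_range] at this
  simpa [add_comm] using this

theorem sq_sum_le_two_mul_sum_succ_sq_mul_sq {T : Finset ℕ} {R : ℕ} (hT : T ⊆ range R)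
    (x : ℕ → ℝ) : (∑ k ∈ T, x k) ^ 2 ≤ 2 * ∑ k ∈ T, ((k : ℝ) + 1) ^ 2 * x k ^ 2 := by
  calc (∑ k ∈ T, x k) ^ 2 = (∑ k ∈ T, ((k : ℝ) + 1)⁻¹ * ((k + 1) * x k)) ^ 2 := by
        congr 1
        refine sum_congr rfl fun k _ => ?_
        field_simp
    _ ≤ (∑ k ∈ T, (((k : ℝ) + 1)⁻¹) ^ 2) * ∑ k ∈ T, ((k + 1) * x k) ^ 2 :=
        sum_mul_sq_le_sq_mul_sq _ _ _
    _ ≤ 2 * ∑ k ∈ T, ((k : ℝ) + 1) ^ 2 * x k ^ 2 := by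
        simp_rw [inv_pow, mul_pow]
        gcongr
        exact (sum_le_sum_of_subset_of_nonneg hT fun _ _ _ => by positivity).trans
          (sum_range_inv_succ_sq_le R)

theorem sq_sum_le_of_card_filter_le_two (R : ℕ) (x : ℕ → ℝ) (full : ℕ → Prop)
    [DecidablePred full] (hx : #{k ∈ range R | ¬ full k ∧ x k ≠ 0} ≤ 2) :
    (∑ k ∈ range R, x k) ^ 2 ≤
      4 * ∑ k ∈ range R with full k, ((k : ℝ) + 1) ^ 2 * x k ^ 2 + 4 * ∑ k ∈ range R, x k ^ 2 := by
  rw [← sum_filter_add_sum_filter_not (range R) full x]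
  set A := ∑ k ∈ range R with full k, x k
  set B := ∑ k ∈ range R with ¬ full k, x k
  have hA := sq_sum_le_two_mul_sum_succ_sq_mul_sq (filter_subset full (range R)) x
  have hB : B ^ 2 ≤ 2 * ∑ k ∈ range R, x k ^ 2 := by
    rw [show B = ∑ k ∈ range R with ¬ full k ∧ x k ≠ 0, x k by
      rw [← filter_filter, sum_filter_ne_zero]]
    calc _ ≤ (#{k ∈ range R | ¬ full k ∧ x k ≠ 0} : ℝ) *
          ∑ k ∈ range R with ¬ full k ∧ x k ≠ 0, x k ^ 2 := sq_sum_le_card_mul_sum_sq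
      _ ≤ 2 * ∑ k ∈ range R, x k ^ 2 := by
        gcongr
        · exact_mod_cast hx
        · exact filter_subset _ _
  nlinarith [sq_nonneg (A - B)]

def majorant (F : ℕ → ℕ → ℝ) (s : ℕ → ℕ) (R : ℕ) : ℝ :=
  ∑ k ∈ range R, (4 * ((k : ℝ) + 1) ^ 2 * F (s k) (s (k + 1)) +
    16 * ((k : ℝ) + 1) * dyadicEnergy F (s k) (s (k + 1) - s k) k)

theorem sum_sq_le_majorant (g : ℕ → ℝ) {s : ℕ → ℕ} (hs : Monotone s) {R : ℕ}
    (hlen : ∀ k, s (k + 1) - s k < 2 ^ (k + 1)) {c : ℕ → ℕ} (hc : Monotone c) {m : ℕ}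
    (h0 : s 0 ≤ c 0) (hm : c m ≤ s R) :
    ∑ j ∈ range m, (∑ n ∈ Ioc (c j) (c (j + 1)), g n) ^ 2 ≤
      majorant (fun a b => (∑ n ∈ Ioc a b, g n) ^ 2) s R := by
  set P : ℕ → ℕ → ℝ := fun j k => ∑ n ∈ Ioc (c j) (c (j + 1)) ∩ Ioc (s k) (s (k + 1)), g n
  set full : ℕ → ℕ → Prop := fun j k => c j ≤ s k ∧ s (k + 1) ≤ c (j + 1)
  have hsplit : ∀ j ∈ range m, ∑ n ∈ Ioc (c j) (c (j + 1)), g n = ∑ k ∈ range R, P j k := by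
    intro j hj
    exact (sum_range_sum_inter_Ioc hs g (Ioc_subset_Ioc (h0.trans (hc j.zero_le))
      ((hc (Nat.succ_le_of_lt (mem_range.1 hj))).trans hm))).symm
  -- a block meeting `(c j, c (j + 1)]` without lying inside it contains `c j` or `c (j + 1)`
  have hcard : ∀ j, #{k ∈ range R | ¬ full j k ∧ P j k ≠ 0} ≤ 2 := by
    intro j
    calc _ ≤ #({k ∈ range R | c j ∈ Ioc (s k) (s (k + 1))} ∪
          {k ∈ range R | c (j + 1) ∈ Ioc (s k) (s (k + 1))}) := by
          refine card_le_card fun k hk => ?_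
          obtain ⟨hk, hnf, hP⟩ := by simpa only [mem_filter] using hk
          obtain ⟨n, hn, -⟩ := exists_ne_zero_of_sum_ne_zero hP
          simp only [full, mem_inter, mem_Ioc] at hn hnf
          simp only [mem_union, mem_filter, mem_Ioc, mem_range] at hk ⊢
          omega
      _ ≤ 1 + 1 := (card_union_le _ _).trans
          (add_le_add (card_filter_mem_Ioc_le_one hs _ _) (card_filter_mem_Ioc_le_one hs _ _))
  have hfull : ∀ k, ∑ j ∈ range m with full j k, P j k ^ 2 ≤
      (∑ n ∈ Ioc (s k) (s (k + 1)), g n) ^ 2 := by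
    intro k
    have hP : ∀ j ∈ {j ∈ range m | full j k}, P j k = ∑ n ∈ Ioc (s k) (s (k + 1)), g n := by
      intro j hj
      simp only [mem_filter, full] at hj
      simp only [P, inter_eq_right.2 (Ioc_subset_Ioc hj.2.1 hj.2.2)]
    rw [sum_congr rfl fun j hj => by rw [hP j hj], sum_const, nsmul_eq_mul]
    rcases le_or_gt (s (k + 1)) (s k) with h | h
    · simp [Ioc_eq_empty_of_le h]
    · have : #{j ∈ range m | full j k} ≤ 1 :=
        (card_le_card fun j hj => by
          simp only [mem_filter, full, mem_range, mem_Ioc] at hj ⊢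
          omega).trans (card_filter_mem_Ioc_le_one hc (s k + 1) (range m))
      exact mul_le_of_le_one_left (sq_nonneg _) (by exact_mod_cast this)
  calc ∑ j ∈ range m, (∑ n ∈ Ioc (c j) (c (j + 1)), g n) ^ 2
      ≤ ∑ j ∈ range m, (4 * ∑ k ∈ range R with full j k, ((k : ℝ) + 1) ^ 2 * P j k ^ 2 +
          4 * ∑ k ∈ range R, P j k ^ 2) := sum_le_sum fun j hj => by
        rw [hsplit j hj]
        exact sq_sum_le_of_card_filter_le_two R (P j) (full j) (hcard j)
    _ = ∑ k ∈ range R, (4 * ((k : ℝ) + 1) ^ 2 * ∑ j ∈ range m with full j k, P j k ^ 2 +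
          4 * ∑ j ∈ range m, P j k ^ 2) := by
        simp only [sum_add_distrib, sum_filter, mul_sum, mul_ite, mul_zero]
        rw [sum_comm]
        congr 1
        · refine sum_congr rfl fun k _ => sum_congr rfl fun j _ => ?_
          split_ifs <;> ring
        · exact sum_comm
    _ ≤ _ := sum_le_sum fun k _ => by
        have := sum_sq_inter_le_dyadicEnergy g hc m (hlen k)
        gcongr ?_ + ?_
        · exact mul_le_mul_of_nonneg_left (hfull k) (by positivity)
        · linarith

theorem integrable_sq_sum_and_integral_eq_of_orthonormal {α ι : Type*} [MeasurableSpace α]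
    [DecidableEq ι] {μ : Measure α} {φ : ι → α → ℝ} (hφ : ∀ n, AEStronglyMeasurable (φ n) μ)
    {S : Finset ι} (hON : ∀ m ∈ S, ∀ n ∈ S, ∫ x, φ m x * φ n x ∂μ = if m = n then 1 else 0)
    (b : ι → ℝ) {I : Finset ι} (hI : I ⊆ S) :
    Integrable (fun x => (∑ n ∈ I, b n * φ n x) ^ 2) μ ∧
      ∫ x, (∑ n ∈ I, b n * φ n x) ^ 2 ∂μ = ∑ n ∈ I, b n ^ 2 := by
  have hL2 : ∀ n ∈ I, MemLp (φ n) 2 μ := fun n hn => by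
    refine (memLp_two_iff_integrable_sq (hφ n)).2 ?_
    by_contra h
    have hsq := hON n (hI hn) n (hI hn)
    simp [← sq, integral_undef h] at hsq
  have hprod : ∀ m ∈ I, ∀ n ∈ I, Integrable (fun x => b m * b n * (φ m x * φ n x)) μ :=
    fun m hm n hn => ((hL2 m hm).integrable_mul (hL2 n hn)).const_mul _
  have hexp : ∀ x, (∑ n ∈ I, b n * φ n x) ^ 2 = ∑ m ∈ I, ∑ n ∈ I, b m * b n * (φ m x * φ n x) := by
    intro x
    rw [sq, sum_mul_sum]
    exact sum_congr rfl fun m _ => sum_congr rfl fun n _ => by ring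
  simp_rw [hexp]
  refine ⟨integrable_finsetSum _ fun m hm => integrable_finsetSum _ (hprod m hm), ?_⟩
  rw [integral_finsetSum _ fun m hm => integrable_finsetSum _ (hprod m hm)]
  refine sum_congr rfl fun m hm => ?_
  rw [integral_finsetSum _ (hprod m hm)]
  simp_rw [integral_const_mul]
  rw [sum_congr rfl fun n hn => by rw [hON m (hI hm) n (hI hn)]]
  simp [hm, sq]

theorem integrable_majorant_and_integral_eq {α : Type*} [MeasurableSpace α] {μ : Measure α}
    {F : α → ℕ → ℕ → ℝ} {G : ℕ → ℕ → ℝ} {s : ℕ → ℕ} (hs : Monotone s) {R : ℕ}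
    (hF : ∀ a b, b ≤ s R → Integrable (fun x => F x a b) μ ∧ ∫ x, F x a b ∂μ = G a b) :
    Integrable (fun x => majorant (F x) s R) μ ∧ ∫ x, majorant (F x) s R ∂μ = majorant G s R := by
  have hsum : ∀ (T : Finset ℕ) (f : ℕ → α → ℝ) (v : ℕ → ℝ),
      (∀ i ∈ T, Integrable (f i) μ ∧ ∫ x, f i x ∂μ = v i) →
      Integrable (fun x => ∑ i ∈ T, f i x) μ ∧ ∫ x, ∑ i ∈ T, f i x ∂μ = ∑ i ∈ T, v i :=
    fun T f v h => ⟨integrable_finsetSum T fun i hi => (h i hi).1,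
      (integral_finsetSum T fun i hi => (h i hi).1).trans (sum_congr rfl fun i hi => (h i hi).2)⟩
  have hlin : ∀ (c d : ℝ) (f f' : α → ℝ) (v v' : ℝ),
      Integrable f μ ∧ ∫ x, f x ∂μ = v → Integrable f' μ ∧ ∫ x, f' x ∂μ = v' →
      Integrable (fun x => c * f x + d * f' x) μ ∧ ∫ x, c * f x + d * f' x ∂μ = c * v + d * v' :=
    fun c d f f' v v' h h' => ⟨(h.1.const_mul c).add (h'.1.const_mul d), by
      rw [integral_add (h.1.const_mul c) (h'.1.const_mul d), integral_const_mul,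
        integral_const_mul, h.2, h'.2]⟩
  refine hsum _ _ _ fun k hk => hlin _ _ _ _ _ _ (hF _ _ (hs (Nat.succ_le_of_lt (mem_range.1 hk))))
    (hsum _ _ _ fun l _ => hsum _ _ _ fun u hu => hF _ _ ?_)
  have hu : u * 2 ^ l ≤ s (k + 1) - s k :=
    (Nat.mul_le_mul_right _ (Nat.lt_succ_iff.1 (mem_range.1 hu))).trans (Nat.div_mul_le_self _ _)
  have hkR : s (k + 1) ≤ s R := hs (mem_range.1 hk)
  have hk : s k ≤ s (k + 1) := hs (Nat.le_add_right k 1)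
  omega

theorem dyadicEnergy_sum_le {h : ℕ → ℝ} (hh : ∀ n, 0 ≤ h n) (p L K : ℕ) :
    dyadicEnergy (fun a b => ∑ n ∈ Ioc a b, h n) p L K ≤ (K + 1) * ∑ n ∈ Ioc p (p + L), h n := by
  have hlevel : ∀ l,
      ∑ u ∈ range (L / 2 ^ l + 1), ∑ n ∈ Ioc (p + (u - 1) * 2 ^ l) (p + u * 2 ^ l), h n
      ≤ ∑ n ∈ Ioc p (p + L), h n := by
    intro l
    have htile := sum_range_sum_Ioc (s := fun u => p + (u - 1) * 2 ^ l)
      (fun u v huv => Nat.add_le_add_left (Nat.mul_le_mul_right _ (Nat.sub_le_sub_right huv 1)) p)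
      h (L / 2 ^ l + 1)
    simp only [Nat.add_sub_cancel, zero_tsub, zero_mul, add_zero] at htile
    rw [htile]
    exact sum_le_sum_of_subset_of_nonneg
      (Ioc_subset_Ioc_right (Nat.add_le_add_left (Nat.div_mul_le_self L _) p)) fun n _ _ => hh n
  calc _ ≤ ∑ l ∈ range (K + 1), ∑ n ∈ Ioc p (p + L), h n := sum_le_sum fun l _ => hlevel l
    _ = _ := by simp

theorem majorant_sum_le {h : ℕ → ℝ} (hh : ∀ n, 0 ≤ h n) {s : ℕ → ℕ} (hs : Monotone s) (R : ℕ) :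
    majorant (fun a b => ∑ n ∈ Ioc a b, h n) s R ≤
      20 * ∑ k ∈ range R, ((k : ℝ) + 1) ^ 2 * ∑ n ∈ Ioc (s k) (s (k + 1)), h n := by
  rw [mul_sum]
  refine sum_le_sum fun k _ => ?_
  have := dyadicEnergy_sum_le hh (s k) (s (k + 1) - s k) k
  rw [Nat.add_sub_cancel' (hs (Nat.le_add_right k 1))] at this
  have hB : 0 ≤ ∑ n ∈ Ioc (s k) (s (k + 1)), h n := sum_nonneg fun n _ => hh n
  nlinarith

/-- `(blockCut N k, blockCut N (k + 1)]` is the block `{n ≤ N | 2^k ≤ n < 2^(k+1)}`. -/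
def blockCut (N k : ℕ) : ℕ := min (2 ^ k - 1) N

theorem blockCut_mono (N : ℕ) : Monotone (blockCut N) :=
  monotone_nat_of_le_succ fun k => by
    have : 2 ^ k ≤ 2 ^ (k + 1) := Nat.pow_le_pow_right two_pos (Nat.le_add_right k 1)
    unfold blockCut
    omega

theorem blockCut_succ_sub_lt (N k : ℕ) : blockCut N (k + 1) - blockCut N k < 2 ^ (k + 1) := by
  have : 2 ^ (k + 1) = 2 * 2 ^ k := pow_succ' 2 k
  have : 1 ≤ 2 ^ k := Nat.one_le_two_pow
  unfold blockCut
  omega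

theorem blockCut_self_add_one (N : ℕ) : blockCut N (N + 1) = N := by
  have := N.lt_two_pow_self.trans (Nat.pow_lt_pow_right one_lt_two N.lt_succ_self)
  unfold blockCut
  omega

theorem two_pow_le_of_mem_Ioc_blockCut {N k n : ℕ}
    (hn : n ∈ Ioc (blockCut N k) (blockCut N (k + 1))) : 2 ^ k ≤ n := by
  unfold blockCut at hn
  simp only [mem_Ioc] at hn
  omega

theorem succ_mul_log_two_le {k n : ℕ} (h : 2 ^ k ≤ n) :
    ((k : ℝ) + 1) * Real.log 2 ≤ 2 * Real.log (n + 1) := by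
  have h2 : (2 : ℝ) ^ k ≤ n := by exact_mod_cast h
  calc ((k : ℝ) + 1) * Real.log 2 = Real.log (2 ^ (k + 1)) := by
        rw [Real.log_pow]
        push_cast
        ring
    _ ≤ Real.log ((n + 1) ^ 2) :=
        Real.log_le_log (by positivity) (by rw [pow_succ]; nlinarith)
    _ = 2 * Real.log (n + 1) := by
        rw [Real.log_pow]
        norm_num

theorem sum_blockCut_le (h : ℕ → ℝ) {N R : ℕ} (hR : blockCut N R = N) :
    ∑ k ∈ range R, ((k : ℝ) + 1) ^ 2 * ∑ n ∈ Ioc (blockCut N k) (blockCut N (k + 1)), h n ^ 2 ≤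
      4 / Real.log 2 ^ 2 * ∑ n ∈ Icc 1 N, h n ^ 2 * Real.log (n + 1) ^ 2 := by
  have hlog : 0 < Real.log 2 := Real.log_pos one_lt_two
  have htile := sum_range_sum_Ioc (blockCut_mono N) (fun n => h n ^ 2 * Real.log (n + 1) ^ 2) R
  rw [show blockCut N 0 = 0 by simp [blockCut], hR,
    ← Icc_add_one_left_eq_Ioc, zero_add] at htile
  rw [← htile, mul_sum]
  refine sum_le_sum fun k _ => ?_
  rw [mul_sum, mul_sum]
  refine sum_le_sum fun n hn => ?_
  have hk := succ_mul_log_two_le (two_pow_le_of_mem_Ioc_blockCut hn)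
  have hsq : ((k : ℝ) + 1) ^ 2 ≤ 4 / Real.log 2 ^ 2 * Real.log (n + 1) ^ 2 := by
    rw [div_mul_eq_mul_div, le_div_iff₀ (by positivity)]
    nlinarith [mul_pos (Nat.cast_add_one_pos k) hlog]
  calc ((k : ℝ) + 1) ^ 2 * h n ^ 2 ≤ 4 / Real.log 2 ^ 2 * Real.log (n + 1) ^ 2 * h n ^ 2 :=
        mul_le_mul_of_nonneg_right hsq (sq_nonneg _)
    _ = _ := by ring

theorem sqVar_sq_le {N : ℕ} {g : ℕ → ℝ} {M : ℝ}
    (h : ∀ m (c : ℕ → ℕ), StrictMono c → c 0 = 0 → c m = N →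
      ∑ j ∈ range m, (∑ n ∈ Ioc (c j) (c (j + 1)), g n) ^ 2 ≤ M) :
    sqVar N g ^ 2 ≤ M := by
  have hM : 0 ≤ M := (sum_nonneg fun _ _ => sq_nonneg _).trans (h N id strictMono_id rfl rfl)
  have hle : sqVar N g ≤ √M := Real.sSup_le (by
    rintro r ⟨m, c, hc, h0, hm, rfl⟩
    exact Real.sqrt_le_sqrt (h m c hc h0 hm)) (Real.sqrt_nonneg M)
  have h0 : 0 ≤ sqVar N g := Real.sSup_nonneg (by
    rintro r ⟨m, c, -, -, -, rfl⟩
    exact Real.sqrt_nonneg _)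
  calc sqVar N g ^ 2 ≤ √M ^ 2 := pow_le_pow_left₀ h0 hle 2
    _ = M := Real.sq_sqrt hM

theorem sqVar_sq_le_majorant (N : ℕ) (g : ℕ → ℝ) :
    sqVar N g ^ 2 ≤ majorant (fun p q => (∑ n ∈ Ioc p q, g n) ^ 2) (blockCut N) (N + 1) :=
  sqVar_sq_le fun _ _ hc h0 hm => sum_sq_le_majorant g (blockCut_mono N) (blockCut_succ_sub_lt N)
    hc.monotone (by simp [h0, blockCut]) (by rw [hm, blockCut_self_add_one])

theorem majorant_blockCut_le (h : ℕ → ℝ) (N : ℕ) :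
    majorant (fun p q => ∑ n ∈ Ioc p q, h n ^ 2) (blockCut N) (N + 1) ≤
      (9 / Real.log 2) ^ 2 * ∑ n ∈ Icc 1 N, h n ^ 2 * Real.log (n + 1) ^ 2 := by
  have hconst : 20 * (4 / Real.log 2 ^ 2) ≤ (9 / Real.log 2) ^ 2 := by
    rw [div_pow, ← mul_div_assoc]
    gcongr
    norm_num
  calc _ ≤ 20 * (4 / Real.log 2 ^ 2 * ∑ n ∈ Icc 1 N, h n ^ 2 * Real.log (n + 1) ^ 2) :=
        (majorant_sum_le (fun n => sq_nonneg (h n)) (blockCut_mono N) (N + 1)).trans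
          (by gcongr; exact sum_blockCut_le h (blockCut_self_add_one N))
    _ ≤ _ := by
        rw [← mul_assoc]
        exact mul_le_mul_of_nonneg_right hconst (sum_nonneg fun n _ => by positivity)

end RademacherMenshov

open RademacherMenshov Finset

theorem sq_var_rademacher_menshov :
    ∃ C : ℝ, 0 < C ∧ ∀ (N : ℕ), 1 ≤ N → ∀ (φ : ℕ → ℝ → ℝ) (a : ℕ → ℝ),
      (∀ n, Measurable (φ n)) →
      (∀ m ∈ Finset.Icc 1 N, ∀ n ∈ Finset.Icc 1 N,
        (∫ x in Set.Icc (0:ℝ) 1, φ m x * φ n x) = if m = n then (1:ℝ) else 0) →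
      Real.sqrt (∫ x in Set.Icc (0:ℝ) 1, (sqVar N fun n => a n * φ n x) ^ 2)
        ≤ C * Real.sqrt (∑ n ∈ Finset.Icc 1 N,
            a n ^ 2 * Real.log ((n : ℝ) + 1) ^ 2) := by
  have hC : 0 < 9 / Real.log 2 := div_pos (by norm_num) (Real.log_pos one_lt_two)
  refine ⟨9 / Real.log 2, hC, fun N _ φ a hφ hON => ?_⟩
  obtain ⟨hint, hval⟩ := integrable_majorant_and_integral_eq (R := N + 1)
    (G := fun p q => ∑ n ∈ Ioc p q, a n ^ 2) (blockCut_mono N) fun p q hq =>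
      integrable_sq_sum_and_integral_eq_of_orthonormal (fun n => (hφ n).aestronglyMeasurable) hON a
        fun n hn => by
          rw [blockCut_self_add_one] at hq
          simp only [mem_Ioc, mem_Icc] at hn ⊢
          omega
  calc √(∫ x in Set.Icc (0 : ℝ) 1, (sqVar N fun n => a n * φ n x) ^ 2)
      ≤ √((9 / Real.log 2) ^ 2 * ∑ n ∈ Icc 1 N, a n ^ 2 * Real.log ((n : ℝ) + 1) ^ 2) :=
        Real.sqrt_le_sqrt <| (integral_mono_of_nonneg (ae_of_all _ fun x => sq_nonneg _) hint
          (ae_of_all _ fun x => sqVar_sq_le_majorant N _)).trans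
            (hval.trans_le (majorant_blockCut_le a N))
    _ = _ := by rw [Real.sqrt_mul (sq_nonneg _), Real.sqrt_sq hC.le]
end

section
/- There exists an absolute constant C > 0 with the following property. Let N ≥ 2, let {φ_n}_{n=1}^N be a real-valued orthonormal system on 𝕋 = [0,1], and let Δ : {1, …, N} → [1, ∞) be nondecreasing such that for every m ≤ N and all real coefficients b_1, …, b_m one has ‖ sup_{1 ≤ K ≤ m} |∑_{n=1}^K b_n φ_n| ‖_{L²} ≤ Δ(m) (∑_{n=1}^m b_n²)^{1/2}. Then for all real coefficients a_1, …, a_N, the function f = ∑_{n=1}^N a_n φ_n satisfies ‖S[f]‖_{L²(V²)} ≤ C Δ(N) (ln N)^{1/2} (∑_{n=1}^N a_n²)^{1/2}. -/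
open MeasureTheory

/-!
Dyadic decomposition. A block `(u, v]` of a partition with `2 ^ s ≤ v - u < 2 ^ (s + 1)` lies in
three consecutive dyadic intervals `(i 2^s, (i + 1) 2^s]` of level `s`; on each of them the sum
over the block is at most twice the maximal partial sum `M s i` of `f` restricted to that
interval. Blocks of level `s` are at least `2 ^ s` long, so each dyadic interval is charged by at
most three blocks, and pointwise `‖S f‖_{V²}² ≤ 36 ∑_{s ≤ log₂ N} ∑_i (M s i)²`. For each of the
`log₂ N + 1` levels the maximal inequality, applied to the disjoint restrictions of `a`, gives
`∑_i ‖M s i‖₂² ≤ Δ(N)² ∑_n a_n²`.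
-/

open Finset

lemma sum_Ico_sum_Ioc_consecutive {M : Type*} [AddCommMonoid M] (g : ℕ → M) {c : ℕ → ℕ}
    (hc : Monotone c) {a b : ℕ} (hab : a ≤ b) :
    ∑ i ∈ Ico a b, ∑ n ∈ Ioc (c i) (c (i + 1)), g n = ∑ n ∈ Ioc (c a) (c b), g n := by
  induction b, hab using Nat.le_induction with
  | base => simp
  | succ b hab ih =>
    rw [sum_Ico_succ_top hab, ih, sum_Ioc_consecutive _ (hc hab) (hc b.le_succ)]

lemma sum_Icc_one_ite_mem_Ioc {M : Type*} [AddCommMonoid M] (f : ℕ → M) {l r K : ℕ} (hK : K ≤ r) :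
    ∑ n ∈ Icc 1 K, (if n ∈ Ioc l r then f n else 0) = ∑ n ∈ Ioc l K, f n := by
  rw [sum_ite_mem]
  congr 1
  ext n
  simp only [mem_inter, mem_Icc, mem_Ioc]
  omega

lemma sum_sum_le_mul_sum_of_card_le {ι κ : Type*} [DecidableEq κ] {S : Finset ι} {P : Finset κ}
    {T : ι → Finset κ} {w : κ → ℝ} {k : ℕ} (hw : ∀ p, 0 ≤ w p) (hT : ∀ j ∈ S, T j ⊆ P)
    (hk : ∀ p ∈ P, #{j ∈ S | p ∈ T j} ≤ k) :
    ∑ j ∈ S, ∑ p ∈ T j, w p ≤ k * ∑ p ∈ P, w p := by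
  calc ∑ j ∈ S, ∑ p ∈ T j, w p = ∑ j ∈ S, ∑ p ∈ P, if p ∈ T j then w p else 0 :=
        sum_congr rfl fun j hj => by rw [sum_ite_mem, inter_eq_right.2 (hT j hj)]
    _ = ∑ p ∈ P, #{j ∈ S | p ∈ T j} * w p := by
        rw [sum_comm]
        refine sum_congr rfl fun p _ => ?_
        rw [← sum_filter, sum_const, nsmul_eq_mul]
    _ ≤ ∑ p ∈ P, k * w p :=
        sum_le_sum fun p hp => mul_le_mul_of_nonneg_right (by exact_mod_cast hk p hp) (hw p)
    _ = k * ∑ p ∈ P, w p := (mul_sum ..).symm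

/-- In `ℝ`, a supremum over an empty index is `0`, hence the nonnegativity. -/
lemma le_biSup_of_nonneg {ι : Type*} {F : Finset ι} {f : ι → ℝ} (hf : ∀ i, 0 ≤ f i) {i : ι}
    (hi : i ∈ F) : f i ≤ ⨆ j ∈ F, f j := by
  refine le_ciSup_of_le ⟨∑ j ∈ F, f j, ?_⟩ i (ciSup_pos (f := fun _ => f i) hi).ge
  rintro _ ⟨j, rfl⟩
  exact Real.iSup_le (fun hj => single_le_sum (fun j _ => hf j) hj)
    (sum_nonneg fun j _ => hf j)

section sqVar

variable {N : ℕ} {g : ℕ → ℝ}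

lemma sqrt_sum_sq_blocks_le_sum_abs {m : ℕ} {c : ℕ → ℕ} (hc : Monotone c) (h0 : c 0 = 0)
    (hm : c m = N) :
    √(∑ j ∈ range m, (∑ n ∈ Ioc (c j) (c (j + 1)), g n) ^ 2) ≤ ∑ n ∈ Ioc 0 N, |g n| := by
  calc √(∑ j ∈ range m, (∑ n ∈ Ioc (c j) (c (j + 1)), g n) ^ 2)
      ≤ √((∑ j ∈ range m, |∑ n ∈ Ioc (c j) (c (j + 1)), g n|) ^ 2) := by
        refine Real.sqrt_le_sqrt ?_
        simpa only [sq_abs] using sum_sq_le_sq_sum_of_nonneg fun j _ => abs_nonneg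
          (∑ n ∈ Ioc (c j) (c (j + 1)), g n)
    _ = ∑ j ∈ range m, |∑ n ∈ Ioc (c j) (c (j + 1)), g n| :=
        Real.sqrt_sq (sum_nonneg fun _ _ => abs_nonneg _)
    _ ≤ ∑ j ∈ range m, ∑ n ∈ Ioc (c j) (c (j + 1)), |g n| :=
        sum_le_sum fun _ _ => abs_sum_le_sum_abs _ _
    _ = ∑ n ∈ Ioc 0 N, |g n| := by
        rw [range_eq_Ico, sum_Ico_sum_Ioc_consecutive _ hc m.zero_le, h0, hm]

lemma sqrt_sum_sq_le_sqVar {m : ℕ} {c : ℕ → ℕ} (hc : StrictMono c) (h0 : c 0 = 0)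
    (hm : c m = N) :
    √(∑ j ∈ range m, (∑ n ∈ Ioc (c j) (c (j + 1)), g n) ^ 2) ≤ sqVar N g := by
  refine le_csSup ⟨∑ n ∈ Ioc 0 N, |g n|, ?_⟩ ⟨m, c, hc, h0, hm, rfl⟩
  rintro _ ⟨m', c', hc', h0', hm', rfl⟩
  exact sqrt_sum_sq_blocks_le_sum_abs hc'.monotone h0' hm'

lemma sqVar_nonneg : 0 ≤ sqVar N g :=
  Real.sSup_nonneg <| by
    rintro _ ⟨m, c, -, -, -, rfl⟩
    exact Real.sqrt_nonneg _

lemma sqVar_sq_le {B : ℝ} (hB : 0 ≤ B)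
    (h : ∀ m c, StrictMono c → c 0 = 0 → c m = N →
      ∑ j ∈ range m, (∑ n ∈ Ioc (c j) (c (j + 1)), g n) ^ 2 ≤ B) :
    sqVar N g ^ 2 ≤ B := by
  refine (Real.le_sqrt sqVar_nonneg hB).1 (Real.sSup_le ?_ (Real.sqrt_nonneg B))
  rintro _ ⟨m, c, hc, h0, hm, rfl⟩
  exact Real.sqrt_le_sqrt (h m c hc h0 hm)

lemma abs_sum_Ioc_le_sqVar {u v : ℕ} (hv : v ≤ N) : |∑ n ∈ Ioc u v, g n| ≤ sqVar N g := by
  rcases le_or_gt v u with hvu | huv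
  · simpa [Ioc_eq_empty_of_le hvu] using sqVar_nonneg
  -- the partition of `(0, N]` into `(u, v]` and singletons
  let c : ℕ → ℕ := fun j => if j ≤ u then j else j + (v - u - 1)
  have hc : StrictMono c := strictMono_nat_of_lt_succ fun j => by
    simp only [c]; split_ifs <;> omega
  have hm : c (u + 1 + (N - v)) = N := by simp only [c]; split_ifs <;> omega
  have hcu : c u = u := if_pos le_rfl
  have hcu' : c (u + 1) = v := by simp only [c]; split_ifs <;> omega
  refine le_trans ?_ (sqrt_sum_sq_le_sqVar (g := g) hc rfl hm)
  rw [← Real.sqrt_sq_eq_abs, ← hcu, ← hcu']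
  exact Real.sqrt_le_sqrt <| single_le_sum (f := fun j => (∑ n ∈ Ioc (c j) (c (j + 1)), g n) ^ 2)
    (fun _ _ => sq_nonneg _) (mem_range.2 (by omega))

end sqVar

/-- Level `s` with `2 ^ s ≤ v - u < 2 ^ (s + 1)`, and the three dyadic intervals
`(i 2^s, (i+1) 2^s]` of that level starting with the one containing `u`: together they cover
`(u, v]`. -/
def dyadicCover (u v : ℕ) : Finset (ℕ × ℕ) :=
  {Nat.log 2 (v - u)} ×ˢ Ico (u / 2 ^ Nat.log 2 (v - u)) (u / 2 ^ Nat.log 2 (v - u) + 3)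

lemma mem_dyadicCover {u v : ℕ} {p : ℕ × ℕ} :
    p ∈ dyadicCover u v ↔
      p.1 = Nat.log 2 (v - u) ∧ u / 2 ^ p.1 ≤ p.2 ∧ p.2 < u / 2 ^ p.1 + 3 := by
  obtain ⟨s, i⟩ := p
  simp only [dyadicCover, mem_product, mem_singleton, mem_Ico]
  constructor <;> rintro ⟨rfl, h⟩ <;> exact ⟨rfl, h⟩

lemma dyadicCover_subset {N u v : ℕ} (huv : u < v) (hv : v ≤ N) :
    dyadicCover u v ⊆ range (Nat.log 2 N + 1) ×ˢ range (N + 2) := by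
  intro p hp
  obtain ⟨hs, -, hi⟩ := mem_dyadicCover.1 hp
  have : p.1 ≤ Nat.log 2 N := hs ▸ Nat.log_mono_right (by omega)
  have : u / 2 ^ p.1 ≤ u := Nat.div_le_self _ _
  simp only [mem_product, mem_range]
  omega

lemma card_filter_mem_dyadicCover_le {c : ℕ → ℕ} (hc : StrictMono c) (m : ℕ) (p : ℕ × ℕ) :
    #{j ∈ range m | p ∈ dyadicCover (c j) (c (j + 1))} ≤ 3 := by
  obtain ⟨s, i⟩ := p
  have hmono : StrictMonoOn (fun j => c j / 2 ^ s)
      ({j ∈ range m | (s, i) ∈ dyadicCover (c j) (c (j + 1))} : Finset ℕ) := by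
    intro x hx y _ hxy
    simp only [coe_filter, Set.mem_ofPred_eq, mem_dyadicCover] at hx
    have hcx : c x < c (x + 1) := hc (lt_add_one x)
    have hlen : 2 ^ s ≤ c (x + 1) - c x := by
      rw [hx.2.1]
      exact Nat.pow_log_le_self 2 (by omega)
    have : c (x + 1) ≤ c y := hc.monotone hxy
    calc c x / 2 ^ s < c x / 2 ^ s + 1 := lt_add_one _
      _ = (c x + 2 ^ s) / 2 ^ s := (Nat.add_div_right _ (by positivity)).symm
      _ ≤ c y / 2 ^ s := Nat.div_le_div_right (by omega)
  calc _ ≤ #(Icc (i - 2) i) := card_le_card_of_injOn _ (fun j hj => ?_) hmono.injOn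
    _ ≤ 3 := by simp only [Nat.card_Icc]; omega
  simp only [coe_filter, Set.mem_ofPred_eq, mem_dyadicCover, coe_Icc, Set.mem_Icc] at hj ⊢
  generalize c j / 2 ^ s = q at hj ⊢
  omega

def IsDyadicMaximalBound (N : ℕ) (g : ℕ → ℝ) (M : ℕ → ℕ → ℝ) : Prop :=
  ∀ s i K, i * 2 ^ s ≤ K → K ≤ (i + 1) * 2 ^ s → K ≤ N →
    |∑ n ∈ Ioc (i * 2 ^ s) K, g n| ≤ M s i

namespace IsDyadicMaximalBound

variable {N : ℕ} {g : ℕ → ℝ} {M : ℕ → ℕ → ℝ}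

lemma abs_sum_Ioc_le (hM : IsDyadicMaximalBound N g M) {s i u v : ℕ} (hu : i * 2 ^ s ≤ u)
    (huv : u ≤ v) (hv : v ≤ (i + 1) * 2 ^ s) (hvN : v ≤ N) :
    |∑ n ∈ Ioc u v, g n| ≤ 2 * M s i := by
  have h₁ := hM s i u hu (huv.trans hv) (huv.trans hvN)
  have h₂ := hM s i v (hu.trans huv) hv hvN
  rw [← sum_Ioc_consecutive g hu huv] at h₂
  have := abs_sub (∑ n ∈ Ioc (i * 2 ^ s) u, g n + ∑ n ∈ Ioc u v, g n)
    (∑ n ∈ Ioc (i * 2 ^ s) u, g n)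
  rw [add_sub_cancel_left] at this
  linarith

lemma sq_sum_inter_le (hM : IsDyadicMaximalBound N g M) {s i u v : ℕ} (hv : v ≤ N) :
    (∑ n ∈ Ioc (i * 2 ^ s) ((i + 1) * 2 ^ s) ∩ Ioc u v, g n) ^ 2 ≤ 4 * M s i ^ 2 := by
  rw [Ioc_inter_Ioc]
  by_cases h : max (i * 2 ^ s) u ≤ min ((i + 1) * 2 ^ s) v
  · calc _ = |∑ n ∈ Ioc (max (i * 2 ^ s) u) (min ((i + 1) * 2 ^ s) v), g n| ^ 2 :=
          (sq_abs _).symm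
      _ ≤ (2 * M s i) ^ 2 := pow_le_pow_left₀ (abs_nonneg _) (hM.abs_sum_Ioc_le
          (le_max_left _ _) h (min_le_left _ _) ((min_le_right _ _).trans hv)) 2
      _ = 4 * M s i ^ 2 := by ring
  · rw [Ioc_eq_empty fun h' => h h'.le, sum_empty, zero_pow two_ne_zero]
    positivity

lemma sq_sum_Ioc_le (hM : IsDyadicMaximalBound N g M) {u v : ℕ} (huv : u < v) (hv : v ≤ N) :
    (∑ n ∈ Ioc u v, g n) ^ 2 ≤ 12 * ∑ p ∈ dyadicCover u v, M p.1 p.2 ^ 2 := by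
  set s := Nat.log 2 (v - u)
  set i₀ := u / 2 ^ s
  have hlen : v - u < 2 ^ s * 2 := by
    simpa only [pow_succ] using Nat.lt_pow_succ_log_self one_lt_two (v - u)
  have hlo : i₀ * 2 ^ s ≤ u := Nat.div_mul_le_self u _
  have hhi : u < i₀ * 2 ^ s + 2 ^ s := Nat.lt_div_mul_add (by positivity)
  have hcover : Ioc u v ⊆ Ioc (i₀ * 2 ^ s) ((i₀ + 3) * 2 ^ s) := by
    intro n hn
    have : (i₀ + 3) * 2 ^ s = i₀ * 2 ^ s + 3 * 2 ^ s := by ring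
    simp only [mem_Ioc] at hn ⊢
    omega
  have hsplit : ∑ n ∈ Ioc u v, g n =
      ∑ i ∈ Ico i₀ (i₀ + 3), ∑ n ∈ Ioc (i * 2 ^ s) ((i + 1) * 2 ^ s) ∩ Ioc u v, g n := by
    have := sum_Ico_sum_Ioc_consecutive (fun n => if n ∈ Ioc u v then g n else 0)
      (c := fun i => i * 2 ^ s) (fun _ _ h => Nat.mul_le_mul_right _ h) (by omega : i₀ ≤ i₀ + 3)
    simp only [sum_ite_mem, inter_eq_right.2 hcover] at this
    exact this.symm
  calc (∑ n ∈ Ioc u v, g n) ^ 2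
      ≤ #(Ico i₀ (i₀ + 3)) *
          ∑ i ∈ Ico i₀ (i₀ + 3), (∑ n ∈ Ioc (i * 2 ^ s) ((i + 1) * 2 ^ s) ∩ Ioc u v, g n) ^ 2 :=
        hsplit ▸ sq_sum_le_card_mul_sum_sq
    _ ≤ 3 * ∑ i ∈ Ico i₀ (i₀ + 3), 4 * M s i ^ 2 := by
        rw [Nat.card_Ico, add_tsub_cancel_left, Nat.cast_ofNat]
        gcongr with i
        exact hM.sq_sum_inter_le hv
    _ = 12 * ∑ i ∈ Ico i₀ (i₀ + 3), M s i ^ 2 := by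
        rw [← mul_sum, ← mul_assoc]
        norm_num
    _ = 12 * ∑ p ∈ dyadicCover u v, M p.1 p.2 ^ 2 := by
        rw [dyadicCover, sum_product, sum_singleton]

lemma sum_sq_blocks_le (hM : IsDyadicMaximalBound N g M) {m : ℕ} {c : ℕ → ℕ}
    (hc : StrictMono c) (hm : c m = N) :
    ∑ j ∈ range m, (∑ n ∈ Ioc (c j) (c (j + 1)), g n) ^ 2 ≤
      36 * ∑ p ∈ range (Nat.log 2 N + 1) ×ˢ range (N + 2), M p.1 p.2 ^ 2 := by
  have hcN : ∀ j ∈ range m, c (j + 1) ≤ N := fun j hj => hm ▸ hc.monotone (mem_range.1 hj)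
  calc _ ≤ ∑ j ∈ range m, 12 * ∑ p ∈ dyadicCover (c j) (c (j + 1)), M p.1 p.2 ^ 2 :=
        sum_le_sum fun j hj => hM.sq_sum_Ioc_le (hc (lt_add_one j)) (hcN j hj)
    _ ≤ 12 * (3 * ∑ p ∈ range (Nat.log 2 N + 1) ×ˢ range (N + 2), M p.1 p.2 ^ 2) := by
        rw [← mul_sum]
        gcongr
        exact_mod_cast sum_sum_le_mul_sum_of_card_le (fun _ => sq_nonneg _)
          (fun j hj => dyadicCover_subset (hc (lt_add_one j)) (hcN j hj))
          (fun p _ => card_filter_mem_dyadicCover_le hc m p)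
    _ = _ := by ring

lemma sqVar_sq_le (hM : IsDyadicMaximalBound N g M) :
    sqVar N g ^ 2 ≤ 36 * ∑ p ∈ range (Nat.log 2 N + 1) ×ˢ range (N + 2), M p.1 p.2 ^ 2 :=
  _root_.sqVar_sq_le (by positivity) fun _ _ hc _ hm => hM.sum_sq_blocks_le hc hm

end IsDyadicMaximalBound

noncomputable def maxPartialSum (m : ℕ) (f : ℕ → ℝ) : ℝ :=
  ⨆ K ∈ Icc 1 m, |∑ n ∈ Icc 1 K, f n|

lemma maxPartialSum_nonneg {m : ℕ} {f : ℕ → ℝ} : 0 ≤ maxPartialSum m f :=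
  Real.iSup_nonneg fun _ => Real.iSup_nonneg fun _ => abs_nonneg _

lemma abs_sum_Icc_le_maxPartialSum {m K : ℕ} (f : ℕ → ℝ) (hK : K ≤ m) :
    |∑ n ∈ Icc 1 K, f n| ≤ maxPartialSum m f := by
  rcases K.eq_zero_or_pos with rfl | hK₀
  · simpa using maxPartialSum_nonneg
  · exact le_biSup_of_nonneg (f := fun K => |∑ n ∈ Icc 1 K, f n|) (fun _ => abs_nonneg _)
      (mem_Icc.2 ⟨hK₀, hK⟩)

lemma maxPartialSum_le {m : ℕ} {f : ℕ → ℝ} {B : ℝ} (hB : 0 ≤ B)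
    (h : ∀ K ∈ Icc 1 m, |∑ n ∈ Icc 1 K, f n| ≤ B) : maxPartialSum m f ≤ B :=
  Real.iSup_le (fun K => Real.iSup_le (h K) hB) hB

lemma measurable_maxPartialSum {α : Type*} [MeasurableSpace α] (m : ℕ) {f : ℕ → α → ℝ}
    (hf : ∀ n, Measurable (f n)) : Measurable fun x => maxPartialSum m fun n => f n x :=
  Measurable.biSup _ (Icc 1 m).countable_toSet fun _ _ =>
    (Finset.measurable_sum _ fun n _ => hf n).abs

def dyadicCut (N s i : ℕ) : ℕ := min (i * 2 ^ s) N

lemma monotone_dyadicCut (N s : ℕ) : Monotone (dyadicCut N s) :=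
  fun _ _ h => min_le_min_right N (Nat.mul_le_mul_right _ h)

def dyadicRestrict (N s i : ℕ) (a : ℕ → ℝ) (n : ℕ) : ℝ :=
  if n ∈ Ioc (dyadicCut N s i) (dyadicCut N s (i + 1)) then a n else 0

lemma sum_Icc_dyadicRestrict_mul (N s i : ℕ) (a ψ : ℕ → ℝ) {K : ℕ}
    (hK : K ≤ dyadicCut N s (i + 1)) :
    ∑ n ∈ Icc 1 K, dyadicRestrict N s i a n * ψ n =
      ∑ n ∈ Ioc (dyadicCut N s i) K, a n * ψ n := by
  simp only [dyadicRestrict, ite_mul, zero_mul]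
  exact sum_Icc_one_ite_mem_Ioc _ hK

lemma sum_sum_sq_dyadicRestrict_le (N s R : ℕ) (a : ℕ → ℝ) :
    ∑ i ∈ range R, ∑ n ∈ Icc 1 (dyadicCut N s (i + 1)), dyadicRestrict N s i a n ^ 2 ≤
      ∑ n ∈ Icc 1 N, a n ^ 2 := by
  have hblock : ∀ i, ∑ n ∈ Icc 1 (dyadicCut N s (i + 1)), dyadicRestrict N s i a n ^ 2 =
      ∑ n ∈ Ioc (dyadicCut N s i) (dyadicCut N s (i + 1)), a n ^ 2 := fun i => by
    simp only [dyadicRestrict, ite_pow, zero_pow two_ne_zero]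
    exact sum_Icc_one_ite_mem_Ioc _ le_rfl
  rw [sum_congr rfl fun i _ => hblock i, range_eq_Ico,
    sum_Ico_sum_Ioc_consecutive _ (monotone_dyadicCut N s) R.zero_le]
  refine sum_le_sum_of_subset_of_nonneg (fun n hn => ?_) fun _ _ _ => sq_nonneg _
  simp only [dyadicCut, mem_Ioc, mem_Icc] at hn ⊢
  omega

lemma isDyadicMaximalBound_maxPartialSum (N : ℕ) (a ψ : ℕ → ℝ) :
    IsDyadicMaximalBound N (fun n => a n * ψ n) fun s i =>
      maxPartialSum (dyadicCut N s (i + 1)) fun n => dyadicRestrict N s i a n * ψ n := by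
  intro s i K h₁ h₂ hN
  have hcut : dyadicCut N s i = i * 2 ^ s := min_eq_left (h₁.trans hN)
  have hK : K ≤ dyadicCut N s (i + 1) := le_min h₂ hN
  rw [← hcut, ← sum_Icc_dyadicRestrict_mul N s i a ψ hK]
  exact abs_sum_Icc_le_maxPartialSum _ hK

lemma maxPartialSum_dyadicRestrict_le_sqVar (N s i : ℕ) (a ψ : ℕ → ℝ) :
    (maxPartialSum (dyadicCut N s (i + 1)) fun n => dyadicRestrict N s i a n * ψ n) ≤
      sqVar N fun n => a n * ψ n :=
  maxPartialSum_le sqVar_nonneg fun K hK => by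
    rw [sum_Icc_dyadicRestrict_mul N s i a ψ (mem_Icc.1 hK).2]
    exact abs_sum_Ioc_le_sqVar ((mem_Icc.1 hK).2.trans (min_le_right _ _))

lemma integral_sq_le_of_sq_le_sum {α ι : Type*} [MeasurableSpace α] {μ : Measure α}
    {V : α → ℝ} {G : ι → α → ℝ} {P : Finset ι} {C : ℝ} (hC : 0 ≤ C)
    (hG : ∀ p ∈ P, AEStronglyMeasurable (G p) μ) (hGV : ∀ p ∈ P, ∀ x, G p x ^ 2 ≤ V x ^ 2)
    (hV : ∀ x, V x ^ 2 ≤ C * ∑ p ∈ P, G p x ^ 2) :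
    ∫ x, V x ^ 2 ∂μ ≤ C * ∑ p ∈ P, ∫ x, G p x ^ 2 ∂μ := by
  by_cases hint : Integrable (fun x => V x ^ 2) μ
  · have hGint : ∀ p ∈ P, Integrable (fun x => G p x ^ 2) μ := fun p hp =>
      hint.mono' ((hG p hp).pow 2) <| Filter.Eventually.of_forall fun x => by
        rw [Real.norm_of_nonneg (sq_nonneg _)]
        exact hGV p hp x
    rw [← integral_finsetSum _ hGint, ← integral_const_mul]
    exact integral_mono_of_nonneg (Filter.Eventually.of_forall fun _ => sq_nonneg _)
      ((integrable_finsetSum _ hGint).const_mul C) (Filter.Eventually.of_forall hV)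
  · rw [integral_undef hint]
    exact mul_nonneg hC (sum_nonneg fun _ _ => integral_nonneg fun _ => sq_nonneg _)

lemma sum_integral_sq_maxPartialSum_dyadicRestrict_le {μ : Measure ℝ} {N : ℕ} (hN : 1 ≤ N)
    {φ : ℕ → ℝ → ℝ} {Δ : ℕ → ℝ} (hΔ₀ : ∀ n ∈ Icc 1 N, 0 ≤ Δ n)
    (hΔ : MonotoneOn Δ (Set.Icc 1 N))
    (hmax : ∀ m ∈ Icc 1 N, ∀ b : ℕ → ℝ,
      √(∫ x, (⨆ K ∈ Icc 1 m, |∑ n ∈ Icc 1 K, b n * φ n x|) ^ 2 ∂μ) ≤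
        Δ m * √(∑ n ∈ Icc 1 m, b n ^ 2))
    (a : ℕ → ℝ) (s R : ℕ) :
    ∑ i ∈ range R,
        ∫ x, (maxPartialSum (dyadicCut N s (i + 1)) fun n =>
          dyadicRestrict N s i a n * φ n x) ^ 2 ∂μ
      ≤ Δ N ^ 2 * ∑ n ∈ Icc 1 N, a n ^ 2 := by
  calc _ ≤ ∑ i ∈ range R,
        Δ N ^ 2 * ∑ n ∈ Icc 1 (dyadicCut N s (i + 1)), dyadicRestrict N s i a n ^ 2 :=
        sum_le_sum fun i _ => ?_
    _ ≤ Δ N ^ 2 * ∑ n ∈ Icc 1 N, a n ^ 2 := by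
        rw [← mul_sum]
        gcongr
        exact sum_sum_sq_dyadicRestrict_le N s R a
  set m := dyadicCut N s (i + 1)
  have hm : m ∈ Icc 1 N :=
    mem_Icc.2 ⟨le_min (Nat.mul_pos i.succ_pos (Nat.two_pow_pos s)) hN, min_le_right _ _⟩
  have hΔm : Δ m ≤ Δ N := hΔ (mem_Icc.1 hm) ⟨hN, le_rfl⟩ (mem_Icc.1 hm).2
  calc ∫ x, (maxPartialSum m fun n => dyadicRestrict N s i a n * φ n x) ^ 2 ∂μ
      = √(∫ x, (maxPartialSum m fun n => dyadicRestrict N s i a n * φ n x) ^ 2 ∂μ) ^ 2 :=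
        (Real.sq_sqrt (integral_nonneg fun _ => sq_nonneg _)).symm
    _ ≤ (Δ m * √(∑ n ∈ Icc 1 m, dyadicRestrict N s i a n ^ 2)) ^ 2 :=
        pow_le_pow_left₀ (Real.sqrt_nonneg _) (hmax m hm _) 2
    _ = Δ m ^ 2 * ∑ n ∈ Icc 1 m, dyadicRestrict N s i a n ^ 2 := by
        rw [mul_pow, Real.sq_sqrt (sum_nonneg fun _ _ => sq_nonneg _)]
    _ ≤ Δ N ^ 2 * ∑ n ∈ Icc 1 m, dyadicRestrict N s i a n ^ 2 := by
        gcongr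
        exact hΔ₀ m hm

lemma natLog_two_add_one_le {N : ℕ} (hN : 2 ≤ N) : (Nat.log 2 N + 1 : ℝ) ≤ 3 * Real.log N := by
  have h₁ : (Nat.log 2 N : ℝ) * Real.log 2 ≤ Real.log N := by
    rw [← Real.log_pow]
    exact Real.log_le_log (by positivity) (by exact_mod_cast Nat.pow_log_le_self 2 (by omega))
  have h₂ : Real.log 2 ≤ Real.log N := Real.log_le_log (by norm_num) (by exact_mod_cast hN)
  have h₃ := Real.log_two_gt_d9
  nlinarith

lemma sqrt_le_mul_sqrt_log_mul_sqrt {N : ℕ} (hN : 2 ≤ N) {I D A : ℝ} (hD : 0 ≤ D) (hA : 0 ≤ A)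
    (hI : I ≤ 36 * ((Nat.log 2 N + 1) * (D ^ 2 * A))) :
    √I ≤ 11 * D * √(Real.log N) * √A := by
  have hlogN : 0 ≤ Real.log N := Real.log_nonneg (by exact_mod_cast (by omega : 1 ≤ N))
  have hDA : 0 ≤ D ^ 2 * A := by positivity
  calc √I ≤ √((11 * D) ^ 2 * (Real.log N * A)) := by
        refine Real.sqrt_le_sqrt (hI.trans ?_)
        nlinarith [mul_le_mul_of_nonneg_right (natLog_two_add_one_le hN) hDA,
          mul_nonneg hlogN hDA]
    _ = 11 * D * √(Real.log N) * √A := by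
        rw [Real.sqrt_mul (sq_nonneg _), Real.sqrt_sq (by positivity), Real.sqrt_mul hlogN]
        ring

theorem sq_var_of_maximal_bound_sqrt_log :
    ∃ C : ℝ, 0 < C ∧ ∀ (N : ℕ), 2 ≤ N → ∀ (φ : ℕ → ℝ → ℝ) (Δ : ℕ → ℝ),
      (∀ n, Measurable (φ n)) →
      (∀ m ∈ Finset.Icc 1 N, ∀ n ∈ Finset.Icc 1 N,
        (∫ x in Set.Icc (0:ℝ) 1, φ m x * φ n x) = if m = n then (1:ℝ) else 0) →
      (∀ n ∈ Finset.Icc 1 N, 1 ≤ Δ n) →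
      (MonotoneOn Δ (Set.Icc 1 N)) →
      (∀ m ∈ Finset.Icc 1 N, ∀ b : ℕ → ℝ,
        Real.sqrt (∫ x in Set.Icc (0:ℝ) 1,
            (⨆ K ∈ Finset.Icc 1 m, |∑ n ∈ Finset.Icc 1 K, b n * φ n x|) ^ 2)
          ≤ Δ m * Real.sqrt (∑ n ∈ Finset.Icc 1 m, b n ^ 2)) →
      ∀ a : ℕ → ℝ,
        Real.sqrt (∫ x in Set.Icc (0:ℝ) 1, (sqVar N fun n => a n * φ n x) ^ 2)
          ≤ C * Δ N * Real.sqrt (Real.log N) *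
              Real.sqrt (∑ n ∈ Finset.Icc 1 N, a n ^ 2) := by
  refine ⟨11, by norm_num, fun N hN φ Δ hφ _ hΔ1 hΔmono hmax a => ?_⟩
  set M : ℕ × ℕ → ℝ → ℝ := fun p x =>
    maxPartialSum (dyadicCut N p.1 (p.2 + 1)) fun n => dyadicRestrict N p.1 p.2 a n * φ n x
  have hV : ∫ x in Set.Icc (0:ℝ) 1, (sqVar N fun n => a n * φ n x) ^ 2 ≤
      36 * ∑ p ∈ range (Nat.log 2 N + 1) ×ˢ range (N + 2), ∫ x in Set.Icc (0:ℝ) 1, M p x ^ 2 :=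
    integral_sq_le_of_sq_le_sum (by norm_num)
      (fun _ _ => (measurable_maxPartialSum _ fun n => (hφ n).const_mul _).aestronglyMeasurable)
      (fun p _ x => pow_le_pow_left₀ maxPartialSum_nonneg
        (maxPartialSum_dyadicRestrict_le_sqVar N p.1 p.2 a (φ · x)) 2)
      (fun x => (isDyadicMaximalBound_maxPartialSum N a (φ · x)).sqVar_sq_le)
  have hlevels : ∑ p ∈ range (Nat.log 2 N + 1) ×ˢ range (N + 2),
      ∫ x in Set.Icc (0:ℝ) 1, M p x ^ 2 ≤
        (Nat.log 2 N + 1 : ℝ) * (Δ N ^ 2 * ∑ n ∈ Icc 1 N, a n ^ 2) := by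
    rw [sum_product]
    refine (sum_le_sum fun s _ => sum_integral_sq_maxPartialSum_dyadicRestrict_le (by omega)
      (fun n hn => zero_le_one.trans (hΔ1 n hn)) hΔmono hmax a s (N + 2)).trans_eq ?_
    rw [sum_const, card_range, nsmul_eq_mul]
    push_cast
    ring
  exact sqrt_le_mul_sqrt_log_mul_sqrt hN (zero_le_one.trans (hΔ1 N (mem_Icc.2 ⟨by omega, le_rfl⟩)))
    (sum_nonneg fun _ _ => sq_nonneg _) (hV.trans (mul_le_mul_of_nonneg_left hlevels (by norm_num)))
end

section
/- There exists an absolute constant C > 0 such that for every N ≥ 1, every real-valued orthonormal system {φ_n}_{n=1}^N on 𝕋 = [0,1], and all real coefficients a_1, …, a_N, the function f = ∑_{n=1}^N a_n φ_n satisfies ‖S[f]‖_{L²(V²)} ≤ C ln(N+1) (∑_{n=1}^N a_n²)^{1/2}. -/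
/-!
Let `K = ⌈log₂ N⌉`. Every interval `(u, v] ⊆ (0, 2 ^ K]` is a disjoint union of at most `2K + 2`
dyadic intervals, so by Cauchy–Schwarz the squared sum over a block of a partition is at most
`2K + 2` times the sum of the squared sums over its dyadic pieces. Distinct blocks use distinct
dyadic intervals, hence pointwise `‖S[f]‖²_{V²}` is at most `2K + 2` times the sum, over all dyadic
intervals `I ⊆ (0, 2 ^ K]`, of `(∑_{n ∈ I} a_n φ_n)²`. Integrating, orthonormality turns each of the
`K + 1` dyadic levels into at most `∑ a_n²`, so `‖S[f]‖²_{L²(V²)} ≤ 2 (K + 1)² ∑ a_n²`.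
-/

open MeasureTheory

open Finset

/-- A decomposition of `(u, v] ⊆ (o, o + 2 ^ K]` into dyadic intervals, the pair `(k, p)` standing
for `(p, p + 2 ^ k]`. -/
def dyadicDecomp : ℕ → ℕ → ℕ → ℕ → Finset (ℕ × ℕ)
  | 0, o, u, v => if u < v then {(0, o)} else ∅
  | K + 1, o, u, v =>
    if u = o ∧ v = o + 2 ^ (K + 1) then {(K + 1, o)}
    else if v ≤ o + 2 ^ K then dyadicDecomp K o u v
    else if o + 2 ^ K ≤ u then dyadicDecomp K (o + 2 ^ K) u v
    else dyadicDecomp K o u (o + 2 ^ K) ∪ dyadicDecomp K (o + 2 ^ K) (o + 2 ^ K) v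

theorem dyadicDecomp_self (K o : ℕ) : dyadicDecomp K o o (o + 2 ^ K) = {(K, o)} := by
  cases K <;> simp [dyadicDecomp]

theorem bounds_of_mem_dyadicDecomp {K o u v k p : ℕ} (hou : o ≤ u) (huv : u ≤ v)
    (hv : v ≤ o + 2 ^ K) (hd : (k, p) ∈ dyadicDecomp K o u v) :
    u ≤ p ∧ p + 2 ^ k ≤ v ∧ k ≤ K := by
  induction K generalizing o u v with
  | zero =>
    simp only [dyadicDecomp] at hd
    split_ifs at hd
    · obtain ⟨rfl, rfl⟩ := Prod.mk.inj (mem_singleton.1 hd)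
      simp only [pow_zero] at hv ⊢
      omega
    · exact absurd hd (notMem_empty _)
  | succ K ih =>
    have hpow : 2 ^ (K + 1) = 2 ^ K + 2 ^ K := by ring
    simp only [dyadicDecomp] at hd
    split_ifs at hd with hfull hleft hright
    · obtain ⟨rfl, rfl⟩ := Prod.mk.inj (mem_singleton.1 hd)
      omega
    · have := ih hou huv hleft hd
      omega
    · have := ih hright huv (by omega) hd
      omega
    · rcases mem_union.1 hd with hd | hd
      · have := ih hou (by omega) le_rfl hd
        omega
      · have := ih le_rfl (by omega) (by omega) hd
        omega

theorem dvd_of_mem_dyadicDecomp {K o u v k p : ℕ} (ho : 2 ^ K ∣ o)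
    (hd : (k, p) ∈ dyadicDecomp K o u v) : 2 ^ k ∣ p := by
  induction K generalizing o u v with
  | zero =>
    simp only [dyadicDecomp] at hd
    split_ifs at hd
    · obtain ⟨rfl, rfl⟩ := Prod.mk.inj (mem_singleton.1 hd)
      exact ho
    · exact absurd hd (notMem_empty _)
  | succ K ih =>
    have ho' : 2 ^ K ∣ o := (pow_dvd_pow 2 K.le_succ).trans ho
    have ho'' : 2 ^ K ∣ o + 2 ^ K := ho'.add dvd_rfl
    simp only [dyadicDecomp] at hd
    split_ifs at hd
    · obtain ⟨rfl, rfl⟩ := Prod.mk.inj (mem_singleton.1 hd)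
      exact ho
    · exact ih ho' hd
    · exact ih ho'' hd
    · rcases mem_union.1 hd with hd | hd
      exacts [ih ho' hd, ih ho'' hd]

theorem sum_dyadicDecomp (b : ℕ → ℝ) {K o u v : ℕ} (hou : o ≤ u) (huv : u ≤ v)
    (hv : v ≤ o + 2 ^ K) :
    ∑ d ∈ dyadicDecomp K o u v, ∑ n ∈ Ioc d.2 (d.2 + 2 ^ d.1), b n = ∑ n ∈ Ioc u v, b n := by
  induction K generalizing o u v with
  | zero =>
    simp only [pow_zero] at hv
    simp only [dyadicDecomp]
    split_ifs
    · obtain ⟨rfl, rfl⟩ : u = o ∧ v = o + 1 := by omega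
      simp
    · obtain rfl : u = v := by omega
      simp
  | succ K ih =>
    have hpow : 2 ^ (K + 1) = 2 ^ K + 2 ^ K := by ring
    simp only [dyadicDecomp]
    split_ifs with hfull hleft hright
    · obtain ⟨rfl, rfl⟩ := hfull
      simp
    · exact ih hou huv hleft
    · exact ih hright huv (by omega)
    · have hdisj : Disjoint (dyadicDecomp K o u (o + 2 ^ K))
          (dyadicDecomp K (o + 2 ^ K) (o + 2 ^ K) v) := by
        refine disjoint_left.2 fun ⟨k, p⟩ h₁ h₂ => ?_
        have := bounds_of_mem_dyadicDecomp hou (by omega) le_rfl h₁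
        have := bounds_of_mem_dyadicDecomp le_rfl (by omega) (by omega) h₂
        have := Nat.one_le_two_pow (n := k)
        omega
      rw [sum_union hdisj, ih hou (by omega) le_rfl, ih le_rfl (by omega) (by omega),
        sum_Ioc_consecutive b (by omega) (by omega)]

theorem card_dyadicDecomp_left_le {K o v : ℕ} (hv : v ≤ o + 2 ^ K) :
    #(dyadicDecomp K o o v) ≤ K + 1 := by
  induction K generalizing o v with
  | zero =>
    simp only [dyadicDecomp]
    split_ifs <;> simp
  | succ K ih =>
    have hpow : 2 ^ (K + 1) = 2 ^ K + 2 ^ K := by ring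
    simp only [dyadicDecomp]
    split_ifs with hfull hleft hright
    · simp
    · exact (ih hleft).trans (by omega)
    · have := Nat.one_le_two_pow (n := K)
      omega
    · grw [card_union_le, dyadicDecomp_self, card_singleton, ih (by omega)]
      omega

theorem card_dyadicDecomp_right_le {K o u : ℕ} (hu : u ≤ o + 2 ^ K) :
    #(dyadicDecomp K o u (o + 2 ^ K)) ≤ K + 1 := by
  induction K generalizing o u with
  | zero =>
    simp only [dyadicDecomp]
    split_ifs <;> simp
  | succ K ih =>
    have hpow : o + 2 ^ (K + 1) = o + 2 ^ K + 2 ^ K := by ring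
    simp only [dyadicDecomp]
    split_ifs with hfull hleft hright
    · simp
    · have := Nat.one_le_two_pow (n := K)
      omega
    · rw [hpow]
      exact (ih (by omega)).trans (by omega)
    · rw [hpow]
      grw [card_union_le, dyadicDecomp_self, card_singleton, ih (by omega)]

theorem card_dyadicDecomp_le {K o u v : ℕ} (hv : v ≤ o + 2 ^ K) :
    #(dyadicDecomp K o u v) ≤ 2 * K + 2 := by
  induction K generalizing o u v with
  | zero =>
    simp only [dyadicDecomp]
    split_ifs <;> simp
  | succ K ih =>
    have hpow : 2 ^ (K + 1) = 2 ^ K + 2 ^ K := by ring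
    simp only [dyadicDecomp]
    split_ifs with hfull hleft hright
    · simp
    · exact (ih hleft).trans (by omega)
    · exact (ih (by omega)).trans (by omega)
    · grw [card_union_le, card_dyadicDecomp_right_le (by omega),
        card_dyadicDecomp_left_le (by omega)]
      omega

/-- Every level `k` runs over `i < 2 ^ K`, not just `i < 2 ^ (K - k)`: the extra intervals lie
beyond `2 ^ K` and only enlarge the sum. -/
def dyadicSqSum (K : ℕ) (b : ℕ → ℝ) : ℝ :=
  ∑ k ∈ range (K + 1), ∑ i ∈ range (2 ^ K), (∑ n ∈ Ioc (i * 2 ^ k) (i * 2 ^ k + 2 ^ k), b n) ^ 2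

section Partition

variable {K m : ℕ} {c : ℕ → ℕ}

theorem bounds_of_mem_dyadicDecomp_partition (hc : Monotone c) (hcm : c m ≤ 2 ^ K) {j k p : ℕ}
    (hj : j ∈ range m) (hd : (k, p) ∈ dyadicDecomp K 0 (c j) (c (j + 1))) :
    c j ≤ p ∧ p + 2 ^ k ≤ c (j + 1) ∧ k ≤ K :=
  bounds_of_mem_dyadicDecomp (Nat.zero_le _) (hc j.le_succ)
    (by rw [zero_add]; exact (hc (mem_range.1 hj)).trans hcm) hd

theorem pairwiseDisjoint_dyadicDecomp_partition (hc : Monotone c) (hcm : c m ≤ 2 ^ K) :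
    (range m : Set ℕ).PairwiseDisjoint fun j => dyadicDecomp K 0 (c j) (c (j + 1)) := by
  intro i hi j hj hij
  refine disjoint_left.2 fun ⟨k, p⟩ h₁ h₂ => ?_
  have := bounds_of_mem_dyadicDecomp_partition hc hcm hi h₁
  have := bounds_of_mem_dyadicDecomp_partition hc hcm hj h₂
  have := Nat.one_le_two_pow (n := k)
  rcases Nat.lt_or_gt_of_ne hij with h | h
  · have := hc (show i + 1 ≤ j from h)
    omega
  · have := hc (show j + 1 ≤ i from h)
    omega

theorem biUnion_dyadicDecomp_partition_subset (hc : Monotone c) (hcm : c m ≤ 2 ^ K) :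
    (range m).biUnion (fun j => dyadicDecomp K 0 (c j) (c (j + 1))) ⊆
      (range (K + 1) ×ˢ range (2 ^ K)).image fun d => (d.1, d.2 * 2 ^ d.1) := by
  intro ⟨k, p⟩ hd
  obtain ⟨j, hj, hd⟩ := mem_biUnion.1 hd
  obtain ⟨-, hpK, hkK⟩ := bounds_of_mem_dyadicDecomp_partition hc hcm hj hd
  obtain ⟨i, rfl⟩ := dvd_of_mem_dyadicDecomp (dvd_zero _) hd
  have hi : i ≤ 2 ^ k * i := Nat.le_mul_of_pos_left i (Nat.two_pow_pos k)
  have := (hc (show j + 1 ≤ m from mem_range.1 hj)).trans hcm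
  refine mem_image.2 ⟨(k, i), mem_product.2 ⟨mem_range.2 (by omega), mem_range.2 ?_⟩,
    by simp [mul_comm]⟩
  have := Nat.one_le_two_pow (n := k)
  omega

theorem sum_sq_partition_le_dyadicSqSum (b : ℕ → ℝ) (hc : Monotone c) (hcm : c m ≤ 2 ^ K) :
    ∑ j ∈ range m, (∑ n ∈ Ioc (c j) (c (j + 1)), b n) ^ 2 ≤ (2 * K + 2) * dyadicSqSum K b := by
  classical
  set D := fun j => dyadicDecomp K 0 (c j) (c (j + 1))
  set B : ℕ × ℕ → ℝ := fun d => ∑ n ∈ Ioc d.2 (d.2 + 2 ^ d.1), b n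
  have hcK : ∀ j ∈ range m, c (j + 1) ≤ 0 + 2 ^ K := fun j hj => by
    rw [zero_add]; exact (hc (mem_range.1 hj)).trans hcm
  calc ∑ j ∈ range m, (∑ n ∈ Ioc (c j) (c (j + 1)), b n) ^ 2
      = ∑ j ∈ range m, (∑ d ∈ D j, B d) ^ 2 := sum_congr rfl fun j hj => by
        rw [sum_dyadicDecomp b (Nat.zero_le _) (hc j.le_succ) (hcK j hj)]
    _ ≤ ∑ j ∈ range m, (2 * K + 2) * ∑ d ∈ D j, B d ^ 2 := sum_le_sum fun j hj => by
        refine sq_sum_le_card_mul_sum_sq.trans (mul_le_mul_of_nonneg_right ?_ (by positivity))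
        exact_mod_cast card_dyadicDecomp_le (hcK j hj)
    _ = (2 * K + 2) * ∑ d ∈ (range m).biUnion D, B d ^ 2 := by
        rw [sum_biUnion (pairwiseDisjoint_dyadicDecomp_partition hc hcm), mul_sum]
    _ ≤ (2 * K + 2) * ∑ d ∈ (range (K + 1) ×ˢ range (2 ^ K)).image
          (fun d => (d.1, d.2 * 2 ^ d.1)), B d ^ 2 := by
        gcongr
        exact biUnion_dyadicDecomp_partition_subset hc hcm
    _ = (2 * K + 2) * dyadicSqSum K b := by
        rw [sum_image, sum_product]
        · rfl
        · intro d _ d' _ h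
          simp only [Prod.mk.injEq] at h
          exact Prod.ext h.1 (Nat.eq_of_mul_eq_mul_right (Nat.two_pow_pos _) (h.1 ▸ h.2))

end Partition

theorem sqVar_congr {N : ℕ} {b b' : ℕ → ℝ} (h : ∀ n ∈ Icc 1 N, b n = b' n) :
    sqVar N b = sqVar N b' := by
  unfold sqVar
  congr 1
  ext r
  refine exists_congr fun m => exists_congr fun c => and_congr_right fun hc =>
    and_congr_right fun _ => and_congr_right fun hcm => ?_
  refine Eq.congr_right (congrArg _ (sum_congr rfl fun j hj =>
    congrArg (· ^ 2) (sum_congr rfl fun n hn => h n ?_)))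
  have := hc.monotone (show j + 1 ≤ m from mem_range.1 hj)
  rw [mem_Ioc] at hn
  rw [mem_Icc]
  omega

theorem sq_sqVar_le {N : ℕ} {b : ℕ → ℝ} {B : ℝ} (hB : 0 ≤ B)
    (h : ∀ m c, StrictMono c → c 0 = 0 → c m = N →
      ∑ j ∈ range m, (∑ n ∈ Ioc (c j) (c (j + 1)), b n) ^ 2 ≤ B) :
    sqVar N b ^ 2 ≤ B := by
  have h0 : 0 ≤ sqVar N b := Real.sSup_nonneg <| by
    rintro _ ⟨m, c, -, -, -, rfl⟩
    exact Real.sqrt_nonneg _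
  refine (Real.le_sqrt h0 hB).1 (Real.sSup_le ?_ (Real.sqrt_nonneg _))
  rintro _ ⟨m, c, hc, hc0, hcm, rfl⟩
  exact Real.sqrt_le_sqrt (h m c hc hc0 hcm)

theorem sq_sqVar_le_dyadicSqSum {N K : ℕ} (b : ℕ → ℝ) (hNK : N ≤ 2 ^ K) :
    sqVar N b ^ 2 ≤ (2 * K + 2) * dyadicSqSum K b := by
  refine sq_sqVar_le ?_ fun _ _ hc _ hcm =>
    sum_sq_partition_le_dyadicSqSum b hc.monotone (hcm ▸ hNK)
  unfold dyadicSqSum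
  positivity

section Orthonormal

variable {α ι : Type*} [MeasurableSpace α]

def OrthonormalOn [DecidableEq ι] (μ : Measure α) (φ : ι → α → ℝ) (s : Finset ι) : Prop :=
  ∀ m ∈ s, ∀ n ∈ s, ∫ x, φ m x * φ n x ∂μ = if m = n then 1 else 0

variable {μ : Measure α} {φ : ι → α → ℝ} {s : Finset ι}

theorem OrthonormalOn.mono [DecidableEq ι] {t : Finset ι} (h : OrthonormalOn μ φ s) (hts : t ⊆ s) :
    OrthonormalOn μ φ t :=
  fun m hm n hn => h m (hts hm) n (hts hn)

theorem memLp_two_of_integral_mul_self_ne_zero {f : α → ℝ} (hf : AEStronglyMeasurable f μ)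
    (h : ∫ x, f x * f x ∂μ ≠ 0) : MemLp f 2 μ :=
  (memLp_two_iff_integrable_sq hf).2 (by simpa only [sq] using Integrable.of_integral_ne_zero h)

theorem integrable_sq_sum_mul (hφ : ∀ n ∈ s, MemLp (φ n) 2 μ) (a : ι → ℝ) :
    Integrable (fun x => (∑ n ∈ s, a n * φ n x) ^ 2) μ :=
  (memLp_finsetSum s fun n hn => (hφ n hn).const_mul (a n)).integrable_sq

theorem integral_sq_sum_mul_of_orthonormal [DecidableEq ι] (hφ : ∀ n ∈ s, MemLp (φ n) 2 μ)
    (horth : OrthonormalOn μ φ s) (a : ι → ℝ) :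
    ∫ x, (∑ n ∈ s, a n * φ n x) ^ 2 ∂μ = ∑ n ∈ s, a n ^ 2 := by
  have hint : ∀ m ∈ s, ∀ n ∈ s, Integrable (fun x => a m * φ m x * (a n * φ n x)) μ :=
    fun m hm n hn => ((hφ m hm).const_mul (a m)).integrable_mul ((hφ n hn).const_mul (a n))
  simp_rw [sq, sum_mul_sum]
  rw [integral_finsetSum _ fun m hm => integrable_finsetSum _ (hint m hm)]
  refine sum_congr rfl fun m hm => ?_
  have hterm : ∀ n ∈ s, ∫ x, a m * φ m x * (a n * φ n x) ∂μ = if m = n then a m * a n else 0 :=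
    fun n hn => by
      calc ∫ x, a m * φ m x * (a n * φ n x) ∂μ = ∫ x, a m * a n * (φ m x * φ n x) ∂μ := by
            congr 1; ext x; ring
        _ = _ := by rw [integral_const_mul, horth m hm n hn, mul_ite, mul_one, mul_zero]
  rw [integral_finsetSum _ (hint m hm), sum_congr rfl hterm, sum_ite_eq, if_pos hm]

end Orthonormal

theorem sum_range_sum_Ioc_consecutive {M : Type*} [AddCommMonoid M] (f : ℕ → M) (d n : ℕ) :
    ∑ i ∈ range n, ∑ k ∈ Ioc (i * d) (i * d + d), f k = ∑ k ∈ Ioc 0 (n * d), f k := by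
  induction n with
  | zero => simp
  | succ n ih =>
    rw [sum_range_succ, ih, sum_Ioc_consecutive f (Nat.zero_le _) (Nat.le_add_right _ _),
      Nat.succ_mul]

section DyadicIntegral

variable {α : Type*} [MeasurableSpace α] {μ : Measure α} {φ : ℕ → α → ℝ} {s : Finset ℕ}

theorem integrable_dyadicSqSum (hφ : ∀ n ∈ s, MemLp (φ n) 2 μ) (a : ℕ → ℝ) (K : ℕ) :
    Integrable (fun x => dyadicSqSum K fun n => if n ∈ s then a n * φ n x else 0) μ := by
  simp only [dyadicSqSum, sum_ite_mem]
  exact integrable_finsetSum _ fun k _ => integrable_finsetSum _ fun i _ =>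
    integrable_sq_sum_mul (fun n hn => hφ n (mem_inter.1 hn).2) a

theorem integral_dyadicSqSum_le (hφ : ∀ n ∈ s, MemLp (φ n) 2 μ) (horth : OrthonormalOn μ φ s)
    (a : ℕ → ℝ) (K : ℕ) :
    ∫ x, dyadicSqSum K (fun n => if n ∈ s then a n * φ n x else 0) ∂μ ≤
      (K + 1) * ∑ n ∈ s, a n ^ 2 := by
  have hφ' : ∀ I : Finset ℕ, ∀ n ∈ I ∩ s, MemLp (φ n) 2 μ := fun I n hn => hφ n (mem_inter.1 hn).2
  have hlevel : ∀ k : ℕ, ∫ x, ∑ i ∈ range (2 ^ K),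
      (∑ n ∈ Ioc (i * 2 ^ k) (i * 2 ^ k + 2 ^ k) ∩ s, a n * φ n x) ^ 2 ∂μ =
        ∑ n ∈ Ioc 0 (2 ^ K * 2 ^ k) ∩ s, a n ^ 2 := fun k => by
    rw [integral_finsetSum _ fun i _ => integrable_sq_sum_mul (hφ' _) a,
      sum_congr rfl fun i _ => integral_sq_sum_mul_of_orthonormal (hφ' _)
        (horth.mono inter_subset_right) a]
    simp only [← sum_ite_mem]
    exact sum_range_sum_Ioc_consecutive _ _ _
  simp only [dyadicSqSum, sum_ite_mem]
  rw [integral_finsetSum _ fun k _ => integrable_finsetSum _ fun i _ =>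
    integrable_sq_sum_mul (hφ' _) a, sum_congr rfl fun k _ => hlevel k]
  calc ∑ k ∈ range (K + 1), ∑ n ∈ Ioc 0 (2 ^ K * 2 ^ k) ∩ s, a n ^ 2
      ≤ ∑ _k ∈ range (K + 1), ∑ n ∈ s, a n ^ 2 := sum_le_sum fun k _ =>
        sum_le_sum_of_subset_of_nonneg inter_subset_right fun n _ _ => sq_nonneg (a n)
    _ = (K + 1) * ∑ n ∈ s, a n ^ 2 := by
        rw [sum_const, card_range, nsmul_eq_mul]
        push_cast
        ring

end DyadicIntegral

theorem integral_sq_sqVar_le {α : Type*} [MeasurableSpace α] {μ : Measure α} {N K : ℕ}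
    (hNK : N ≤ 2 ^ K) {φ : ℕ → α → ℝ} (hφ : ∀ n ∈ Icc 1 N, AEStronglyMeasurable (φ n) μ)
    (horth : OrthonormalOn μ φ (Icc 1 N)) (a : ℕ → ℝ) :
    ∫ x, sqVar N (fun n => a n * φ n x) ^ 2 ∂μ ≤ 2 * (K + 1) ^ 2 * ∑ n ∈ Icc 1 N, a n ^ 2 := by
  have hL2 : ∀ n ∈ Icc 1 N, MemLp (φ n) 2 μ := fun n hn =>
    memLp_two_of_integral_mul_self_ne_zero (hφ n hn) (by simp [horth n hn n hn])
  have hpt : ∀ x, sqVar N (fun n => a n * φ n x) ^ 2 ≤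
      (2 * K + 2) * dyadicSqSum K fun n => if n ∈ Icc 1 N then a n * φ n x else 0 := fun x => by
    rw [sqVar_congr fun n hn => (if_pos hn).symm]
    exact sq_sqVar_le_dyadicSqSum _ hNK
  calc ∫ x, sqVar N (fun n => a n * φ n x) ^ 2 ∂μ
      ≤ ∫ x, (2 * K + 2) * dyadicSqSum K (fun n => if n ∈ Icc 1 N then a n * φ n x else 0) ∂μ :=
        integral_mono_of_nonneg (ae_of_all _ fun x => sq_nonneg _)
          ((integrable_dyadicSqSum hL2 a K).const_mul _) (ae_of_all _ hpt)
    _ ≤ (2 * K + 2) * ((K + 1) * ∑ n ∈ Icc 1 N, a n ^ 2) := by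
        rw [integral_const_mul]
        gcongr
        exact integral_dyadicSqSum_le hL2 horth a K
    _ = 2 * (K + 1) ^ 2 * ∑ n ∈ Icc 1 N, a n ^ 2 := by ring

theorem clog_two_add_one_le_log {N : ℕ} (hN : 1 ≤ N) :
    (Nat.clog 2 N : ℝ) + 1 ≤ 3 * Real.log (N + 1) := by
  have hK : 2 ^ Nat.clog 2 N < 2 * N := by
    rcases hN.eq_or_lt with rfl | hN
    · simp
    · have := Nat.pow_pred_clog_lt_self one_lt_two hN
      rw [← Nat.succ_pred_eq_of_pos (Nat.clog_pos one_lt_two hN), pow_succ]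
      omega
  have hpow : (2 : ℝ) ^ (Nat.clog 2 N + 1) < ((N : ℝ) + 1) ^ 2 := by
    have : 2 ^ (Nat.clog 2 N + 1) < (N + 1) ^ 2 := by rw [pow_succ]; nlinarith
    exact_mod_cast this
  have hlog := Real.log_lt_log (by positivity) hpow
  rw [Real.log_pow, Real.log_pow] at hlog
  push_cast at hlog
  have hlog2 := mul_le_mul_of_nonneg_left Real.log_two_gt_d9.le
    (by positivity : (0 : ℝ) ≤ Nat.clog 2 N + 1)
  have hL : 0 ≤ Real.log ((N : ℝ) + 1) := Real.log_nonneg (by linarith)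
  linarith

theorem sq_var_log_bound :
    ∃ C : ℝ, 0 < C ∧ ∀ (N : ℕ), 1 ≤ N → ∀ (φ : ℕ → ℝ → ℝ) (a : ℕ → ℝ),
      (∀ n, Measurable (φ n)) →
      (∀ m ∈ Finset.Icc 1 N, ∀ n ∈ Finset.Icc 1 N,
        (∫ x in Set.Icc (0:ℝ) 1, φ m x * φ n x) = if m = n then (1:ℝ) else 0) →
      Real.sqrt (∫ x in Set.Icc (0:ℝ) 1, (sqVar N fun n => a n * φ n x) ^ 2)
        ≤ C * Real.log ((N : ℝ) + 1) * Real.sqrt (∑ n ∈ Finset.Icc 1 N, a n ^ 2) := by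
  refine ⟨6, by norm_num, fun N hN φ a hφ horth => ?_⟩
  have hL2 := integral_sq_sqVar_le (Nat.le_pow_clog one_lt_two N)
    (fun n _ => (hφ n).aestronglyMeasurable) horth a
  have hK := clog_two_add_one_le_log hN
  calc √(∫ x in Set.Icc (0:ℝ) 1, sqVar N (fun n => a n * φ n x) ^ 2)
      ≤ √((2 * ((Nat.clog 2 N : ℝ) + 1)) ^ 2 * ∑ n ∈ Icc 1 N, a n ^ 2) := by
        refine Real.sqrt_le_sqrt (hL2.trans ?_)
        gcongr
        nlinarith
    _ = 2 * ((Nat.clog 2 N : ℝ) + 1) * √(∑ n ∈ Icc 1 N, a n ^ 2) := by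
        rw [Real.sqrt_mul (by positivity), Real.sqrt_sq (by positivity)]
    _ ≤ 6 * Real.log (N + 1) * √(∑ n ∈ Icc 1 N, a n ^ 2) :=
        mul_le_mul_of_nonneg_right (by linarith) (Real.sqrt_nonneg _)
end

section
/- Let w : ℕ → (0, ∞) be a function monotonically increasing to infinity. Then there exists a complete real-valued orthonormal system {φ_n}_{n∈ℕ} on 𝕋 = [0,1] and a constant C > 0 such that for all sufficiently large N and all real coefficients a_1, …, a_N, the function f = ∑_{n=1}^N a_n φ_n satisfies ‖S[f]‖_{L²(V²)} ≤ C w(N) (∑_{n=1}^N a_n²)^{1/2}. -/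
/-!
Take the Haar system `1, h_{j,k}` and list it level by level, the levels in an order `σ` that
alternates between a very sparse sequence of levels and the remaining ones. Haar functions of one
level have disjoint supports, so at every point at most one function per block of the list is
non-zero. Cauchy–Schwarz on each interval of a partition then bounds the square variation of
`(a n φ n x)_{n ≤ N}` by `√(B + 1) (∑ (a n φ n x)²)^{1/2}`, where `B + 1` blocks meet
`{0, …, N}`, and integrating gives `‖S[f]‖_{L²(V²)} ≤ √(B + 1) ‖a‖₂`. Since every
other block is a huge level, `B` grows as slowly as we please in `N`. Completeness holds whatever
the order: a function orthogonal to the Haar system integrates to zero over every dyadic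
interval, hence over every interval with dyadic endpoints, and these generate the Borel sets.
-/

open MeasureTheory

namespace Finset

theorem sq_sum_le_card_filter_ne_zero_mul_sum_sq {ι : Type*} (s : Finset ι) (t : ι → ℝ) :
    (∑ i ∈ s, t i) ^ 2 ≤ #{i ∈ s | t i ≠ 0} * ∑ i ∈ s, t i ^ 2 :=
  calc (∑ i ∈ s, t i) ^ 2 = (∑ i ∈ s with t i ≠ 0, t i) ^ 2 := by rw [sum_filter_ne_zero]
    _ ≤ (#{i ∈ s | t i ≠ 0} : ℝ) * ∑ i ∈ s with t i ≠ 0, t i ^ 2 := sq_sum_le_card_mul_sum_sq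
    _ ≤ (#{i ∈ s | t i ≠ 0} : ℝ) * ∑ i ∈ s, t i ^ 2 := by
      gcongr
      exact filter_subset _ s

theorem sum_range_sum_Ioc {M : Type*} [AddCommMonoid M] (u : ℕ → M) {c : ℕ → ℕ}
    (hc : Monotone c) (m : ℕ) :
    ∑ j ∈ range m, ∑ n ∈ Ioc (c j) (c (j + 1)), u n = ∑ n ∈ Ioc (c 0) (c m), u n := by
  induction m with
  | zero => simp
  | succ m ih => rw [sum_range_succ, ih, sum_Ioc_consecutive u (hc m.zero_le) (hc m.le_succ)]

end Finset

open Finset in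
theorem sqVar_sq_le_card_mul_sum_sq (N : ℕ) (t : ℕ → ℝ) :
    sqVar N t ^ 2 ≤ #{n ∈ Icc 1 N | t n ≠ 0} * ∑ n ∈ Icc 1 N, t n ^ 2 := by
  set K : ℝ := ((#{n ∈ Icc 1 N | t n ≠ 0} : ℕ) : ℝ)
  have hle : sqVar N t ≤ √(K * ∑ n ∈ Icc 1 N, t n ^ 2) := by
    refine Real.sSup_le ?_ (Real.sqrt_nonneg _)
    rintro _ ⟨m, c, hc, hc0, hcm, rfl⟩
    gcongr
    calc ∑ j ∈ range m, (∑ n ∈ Ioc (c j) (c (j + 1)), t n) ^ 2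
        ≤ ∑ j ∈ range m, K * ∑ n ∈ Ioc (c j) (c (j + 1)), t n ^ 2 := by
          gcongr with j hj
          refine (sq_sum_le_card_filter_ne_zero_mul_sum_sq _ _).trans ?_
          refine mul_le_mul_of_nonneg_right (Nat.cast_le.2 (card_le_card
            (filter_subset_filter _ fun n hn => ?_))) (by positivity)
          have : c (j + 1) ≤ c m := hc.monotone (mem_range.1 hj)
          simp only [mem_Ioc, mem_Icc] at hn ⊢
          omega
      _ = K * ∑ n ∈ Icc 1 N, t n ^ 2 := by
          rw [← mul_sum, sum_range_sum_Ioc _ hc.monotone, hc0, hcm]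
          rfl
  have h0 : 0 ≤ sqVar N t :=
    Real.sSup_nonneg (by rintro _ ⟨m, c, -, -, -, rfl⟩; exact Real.sqrt_nonneg _)
  calc sqVar N t ^ 2 ≤ √(K * ∑ n ∈ Icc 1 N, t n ^ 2) ^ 2 := by gcongr
    _ = K * ∑ n ∈ Icc 1 N, t n ^ 2 := Real.sq_sqrt (by positivity)

open Finset in
theorem integral_sqVar_sq_le {α : Type*} [MeasurableSpace α] {μ : Measure α}
    {φ : ℕ → α → ℝ} {N K : ℕ} (hφ : ∀ n ∈ Icc 1 N, MemLp (φ n) 2 μ)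
    (hnorm : ∀ n ∈ Icc 1 N, ∫ x, φ n x ^ 2 ∂μ = 1)
    (hK : ∀ x, #{n ∈ Icc 1 N | φ n x ≠ 0} ≤ K) (a : ℕ → ℝ) :
    ∫ x, sqVar N (fun n => a n * φ n x) ^ 2 ∂μ ≤ K * ∑ n ∈ Icc 1 N, a n ^ 2 := by
  have hint : ∀ n ∈ Icc 1 N, Integrable (fun x => (a n * φ n x) ^ 2) μ := fun n hn => by
    simpa only [mul_pow] using (hφ n hn).integrable_sq.const_mul (a n ^ 2)
  calc ∫ x, sqVar N (fun n => a n * φ n x) ^ 2 ∂μ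
      ≤ ∫ x, (K : ℝ) * ∑ n ∈ Icc 1 N, (a n * φ n x) ^ 2 ∂μ := by
        refine integral_mono_of_nonneg (.of_forall fun x => sq_nonneg _)
          ((integrable_finsetSum _ hint).const_mul _) (.of_forall fun x => ?_)
        refine (sqVar_sq_le_card_mul_sum_sq N _).trans
          (mul_le_mul_of_nonneg_right ?_ (by positivity))
        refine Nat.cast_le.2 ((card_le_card fun n hn => ?_).trans (hK x))
        simp only [mem_filter] at hn ⊢
        exact ⟨hn.1, right_ne_zero_of_mul hn.2⟩
    _ = K * ∑ n ∈ Icc 1 N, a n ^ 2 := by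
        rw [integral_const_mul, integral_finsetSum _ hint]
        congr 1
        refine sum_congr rfl fun n hn => ?_
        simp only [mul_pow]
        rw [integral_const_mul, hnorm n hn, mul_one]

open Finset in
theorem sqrt_integral_sqVar_sq_le {α : Type*} [MeasurableSpace α] {μ : Measure α}
    {φ : ℕ → α → ℝ} {N K : ℕ} (hφ : ∀ n ∈ Icc 1 N, MemLp (φ n) 2 μ)
    (hnorm : ∀ n ∈ Icc 1 N, ∫ x, φ n x ^ 2 ∂μ = 1)
    (hK : ∀ x, #{n ∈ Icc 1 N | φ n x ≠ 0} ≤ K) (a : ℕ → ℝ) :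
    √(∫ x, sqVar N (fun n => a n * φ n x) ^ 2 ∂μ) ≤ √K * √(∑ n ∈ Icc 1 N, a n ^ 2) := by
  rw [← Real.sqrt_mul K.cast_nonneg]
  exact Real.sqrt_le_sqrt (integral_sqVar_sq_le hφ hnorm hK a)

open Set Filter

noncomputable section

def dyadicInterval (j : ℕ) (k : ℤ) : Set ℝ := Ico (k / 2 ^ j) ((k + 1) / 2 ^ j)

theorem measurableSet_dyadicInterval (j : ℕ) (k : ℤ) : MeasurableSet (dyadicInterval j k) :=
  measurableSet_Ico

theorem mem_dyadicInterval_iff {j : ℕ} {k : ℤ} {x : ℝ} :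
    x ∈ dyadicInterval j k ↔ ⌊2 ^ j * x⌋ = k := by
  have h : (0 : ℝ) < 2 ^ j := by positivity
  rw [Int.floor_eq_iff, dyadicInterval, mem_Ico, div_le_iff₀ h, lt_div_iff₀ h, mul_comm x]

theorem floor_two_pow_mul_eq_div {j J : ℕ} (h : j ≤ J) (x : ℝ) :
    ⌊2 ^ j * x⌋ = ⌊2 ^ J * x⌋ / 2 ^ (J - j) := by
  obtain ⟨d, rfl⟩ := Nat.exists_eq_add_of_le h
  have : (2 : ℝ) ^ j * x = 2 ^ (j + d) * x / ((2 ^ d : ℕ) : ℝ) := by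
    push_cast
    rw [pow_add]
    field_simp
  rw [this, Int.floor_div_natCast, Nat.add_sub_cancel_left]
  push_cast
  rfl

theorem dyadicInterval_union (j : ℕ) (k : ℤ) :
    dyadicInterval (j + 1) (2 * k) ∪ dyadicInterval (j + 1) (2 * k + 1) = dyadicInterval j k := by
  ext x
  simp only [mem_union, mem_dyadicInterval_iff, floor_two_pow_mul_eq_div (j.le_add_right 1) x,
    Nat.add_sub_cancel_left, pow_one]
  omega

theorem disjoint_dyadicInterval {j : ℕ} {k k' : ℤ} (h : k ≠ k') :
    Disjoint (dyadicInterval j k) (dyadicInterval j k') :=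
  disjoint_left.2 fun _ hx hx' =>
    h ((mem_dyadicInterval_iff.1 hx).symm.trans (mem_dyadicInterval_iff.1 hx'))

theorem dyadicInterval_subset_Icc {j : ℕ} {k : ℤ} (hk₀ : 0 ≤ k) (hk : k < 2 ^ j) :
    dyadicInterval j k ⊆ Icc 0 1 := by
  have h : (0 : ℝ) < 2 ^ j := by positivity
  have hk₀' : (0 : ℝ) ≤ k := by exact_mod_cast hk₀
  have hk' : (k : ℝ) + 1 ≤ 2 ^ j := by exact_mod_cast hk
  refine Ico_subset_Icc_self.trans (Icc_subset_Icc (by positivity) ?_)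
  rwa [div_le_one h]

theorem volume_restrict_dyadicInterval_eq_zero {j : ℕ} {k : ℤ} (hk : ¬(0 ≤ k ∧ k < 2 ^ j)) :
    volume.restrict (Icc 0 1) (dyadicInterval j k) = 0 := by
  rw [Measure.restrict_apply (measurableSet_dyadicInterval j k)]
  refine measure_mono_null (fun x ⟨hx, hx01⟩ => ?_) (measure_singleton (1 : ℝ))
  have h : (0 : ℝ) < 2 ^ j := by positivity
  rw [mem_dyadicInterval_iff, Int.floor_eq_iff] at hx
  rcases not_and_or.1 hk with hk | hk
  · have : (k : ℝ) + 1 ≤ 0 := by exact_mod_cast (by omega : k + 1 ≤ 0)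
    nlinarith [hx01.1]
  · have : (2 : ℝ) ^ j ≤ k := by exact_mod_cast (not_lt.1 hk)
    exact le_antisymm hx01.2 (by nlinarith)

theorem measureReal_restrict_dyadicInterval {j : ℕ} {k : ℤ} (hk₀ : 0 ≤ k) (hk : k < 2 ^ j) :
    (volume.restrict (Icc 0 1)).real (dyadicInterval j k) = (2 ^ j)⁻¹ := by
  rw [measureReal_restrict_apply (measurableSet_dyadicInterval j k),
    inter_eq_left.2 (dyadicInterval_subset_Icc hk₀ hk), dyadicInterval, Real.volume_real_Ico_of_le]
  · ring
  · gcongr; linarith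

theorem left_mem_dyadicInterval (j : ℕ) (k : ℤ) : (k / 2 ^ j : ℝ) ∈ dyadicInterval j k :=
  left_mem_Ico.2 (by gcongr; linarith)

def haar (j : ℕ) (k : ℤ) (x : ℝ) : ℝ :=
  √(2 ^ j) * ((dyadicInterval (j + 1) (2 * k)).indicator 1 x -
    (dyadicInterval (j + 1) (2 * k + 1)).indicator 1 x)

theorem measurable_haar (j : ℕ) (k : ℤ) : Measurable (haar j k) :=
  ((measurable_const.indicator (measurableSet_dyadicInterval _ _)).sub
    (measurable_const.indicator (measurableSet_dyadicInterval _ _))).const_mul _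

theorem haar_of_mem_left {j : ℕ} {k : ℤ} {x : ℝ} (hx : x ∈ dyadicInterval (j + 1) (2 * k)) :
    haar j k x = √(2 ^ j) := by
  have hx' : x ∉ dyadicInterval (j + 1) (2 * k + 1) :=
    disjoint_left.1 (disjoint_dyadicInterval (by omega)) hx
  simp [haar, hx, hx']

theorem haar_of_mem_right {j : ℕ} {k : ℤ} {x : ℝ} (hx : x ∈ dyadicInterval (j + 1) (2 * k + 1)) :
    haar j k x = -√(2 ^ j) := by
  have hx' : x ∉ dyadicInterval (j + 1) (2 * k) :=
    disjoint_right.1 (disjoint_dyadicInterval (by omega)) hx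
  simp [haar, hx, hx']

theorem haar_eq_zero_of_notMem {j : ℕ} {k : ℤ} {x : ℝ} (hx : x ∉ dyadicInterval j k) :
    haar j k x = 0 := by
  rw [← dyadicInterval_union, mem_union, not_or] at hx
  simp [haar, hx.1, hx.2]

theorem mem_dyadicInterval_of_haar_ne_zero {j : ℕ} {k : ℤ} {x : ℝ} (hx : haar j k x ≠ 0) :
    x ∈ dyadicInterval j k :=
  not_imp_comm.1 haar_eq_zero_of_notMem hx

theorem abs_haar_le (j : ℕ) (k : ℤ) (x : ℝ) : |haar j k x| ≤ √(2 ^ j) := by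
  by_cases hx : x ∈ dyadicInterval j k
  · rw [← dyadicInterval_union] at hx
    rcases hx with hx | hx
    · rw [haar_of_mem_left hx, abs_of_nonneg (Real.sqrt_nonneg _)]
    · rw [haar_of_mem_right hx, abs_neg, abs_of_nonneg (Real.sqrt_nonneg _)]
  · rw [haar_eq_zero_of_notMem hx, abs_zero]
    positivity

theorem memLp_haar {μ : Measure ℝ} [IsFiniteMeasure μ] (p : ENNReal) (j : ℕ) (k : ℤ) :
    MemLp (haar j k) p μ :=
  .of_bound (measurable_haar j k).aestronglyMeasurable _ (.of_forall (abs_haar_le j k))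

theorem haar_eq_of_mem_dyadicInterval {j j' : ℕ} (h : j < j') (k : ℤ) {k' : ℤ} {x y : ℝ}
    (hx : x ∈ dyadicInterval j' k') (hy : y ∈ dyadicInterval j' k') : haar j k x = haar j k y := by
  have hxy : ⌊2 ^ (j + 1) * x⌋ = ⌊2 ^ (j + 1) * y⌋ := by
    rw [floor_two_pow_mul_eq_div h, floor_two_pow_mul_eq_div h, mem_dyadicInterval_iff.1 hx,
      mem_dyadicInterval_iff.1 hy]
  simp only [haar, indicator, mem_dyadicInterval_iff, hxy, Pi.one_apply]

theorem integral_mul_haar {μ : Measure ℝ} {g : ℝ → ℝ} (hg : Integrable g μ) (j : ℕ) (k : ℤ) :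
    ∫ x, g x * haar j k x ∂μ = √(2 ^ j) *
      ((∫ x in dyadicInterval (j + 1) (2 * k), g x ∂μ) -
        ∫ x in dyadicInterval (j + 1) (2 * k + 1), g x ∂μ) := by
  have h : ∀ x, g x * haar j k x = √(2 ^ j) * ((dyadicInterval (j + 1) (2 * k)).indicator g x -
      (dyadicInterval (j + 1) (2 * k + 1)).indicator g x) := fun x => by
    simp only [haar, indicator, Pi.one_apply]
    split_ifs <;> ring
  simp_rw [h]
  rw [integral_const_mul, integral_sub (hg.indicator (measurableSet_dyadicInterval _ _))
      (hg.indicator (measurableSet_dyadicInterval _ _)),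
    integral_indicator (measurableSet_dyadicInterval _ _),
    integral_indicator (measurableSet_dyadicInterval _ _)]


local notation "μ₀₁" => volume.restrict (Icc (0 : ℝ) 1)

theorem integral_haar {j : ℕ} {k : ℤ} (hk₀ : 0 ≤ k) (hk : k < 2 ^ j) :
    ∫ x, haar j k x ∂μ₀₁ = 0 := by
  have h := integral_mul_haar (integrable_const (1 : ℝ)) (μ := μ₀₁) j k
  simp only [one_mul, setIntegral_const, smul_eq_mul, mul_one] at h
  rw [h, measureReal_restrict_dyadicInterval (by omega) (by omega),
    measureReal_restrict_dyadicInterval (by omega) (by omega), sub_self, mul_zero]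

theorem integral_haar_mul_self {j : ℕ} {k : ℤ} (hk₀ : 0 ≤ k) (hk : k < 2 ^ j) :
    ∫ x, haar j k x * haar j k x ∂μ₀₁ = 1 := by
  rw [integral_mul_haar ((memLp_haar 1 j k).integrable le_rfl),
    setIntegral_congr_fun (measurableSet_dyadicInterval _ _) fun x hx => haar_of_mem_left hx,
    setIntegral_congr_fun (measurableSet_dyadicInterval _ _) fun x hx => haar_of_mem_right hx,
    setIntegral_const, setIntegral_const, measureReal_restrict_dyadicInterval (by omega) (by omega),
    measureReal_restrict_dyadicInterval (by omega) (by omega)]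
  have h2 : √(2 ^ j) * √(2 ^ j) = (2 : ℝ) ^ j := Real.mul_self_sqrt (by positivity)
  simp only [smul_eq_mul, mul_neg, sub_neg_eq_add]
  calc √(2 ^ j) * ((2 ^ (j + 1))⁻¹ * √(2 ^ j) + (2 ^ (j + 1))⁻¹ * √(2 ^ j))
      = √(2 ^ j) * √(2 ^ j) * 2 / 2 ^ (j + 1) := by ring
    _ = 1 := by rw [h2, pow_succ, div_self (by positivity)]

theorem integral_haar_mul_haar {j j' : ℕ} {k k' : ℤ} (hk₀ : 0 ≤ k) (hk : k < 2 ^ j)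
    (hk₀' : 0 ≤ k') (hk' : k' < 2 ^ j') :
    ∫ x, haar j k x * haar j' k' x ∂μ₀₁ = if (j, k) = (j', k') then 1 else 0 := by
  have cross : ∀ {j j' : ℕ} {k k' : ℤ}, 0 ≤ k' → k' < 2 ^ j' → j < j' →
      ∫ x, haar j k x * haar j' k' x ∂μ₀₁ = 0 := fun {j j' k k'} hk₀' hk' h => by
    have hconst : ∀ x, haar j k x * haar j' k' x = haar j k (k' / 2 ^ j') * haar j' k' x := by
      intro x
      by_cases hx : x ∈ dyadicInterval j' k'
      · rw [haar_eq_of_mem_dyadicInterval h k hx (left_mem_dyadicInterval j' k')]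
      · simp [haar_eq_zero_of_notMem hx]
    simp_rw [hconst]
    rw [integral_const_mul, integral_haar hk₀' hk', mul_zero]
  rcases lt_trichotomy j j' with h | rfl | h
  · rw [cross hk₀' hk' h, if_neg (by simp [h.ne])]
  · by_cases hkk : k = k'
    · subst hkk
      rw [integral_haar_mul_self hk₀ hk, if_pos rfl]
    · have hzero : ∀ x, haar j k x * haar j k' x = 0 := fun x => by
        by_contra hne
        exact disjoint_left.1 (disjoint_dyadicInterval hkk)
          (mem_dyadicInterval_of_haar_ne_zero (left_ne_zero_of_mul hne))
          (mem_dyadicInterval_of_haar_ne_zero (right_ne_zero_of_mul hne))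
      simp [hzero, hkk]
  · simp_rw [mul_comm (haar j k _)]
    rw [cross hk₀ hk h, if_neg (by simp [h.ne'])]

def haarSystem : Option (ℕ × ℤ) → ℝ → ℝ
  | none => 1
  | some (j, k) => haar j k

def IsHaarIndex : Option (ℕ × ℤ) → Prop
  | none => True
  | some (j, k) => 0 ≤ k ∧ k < 2 ^ j

theorem measurable_haarSystem : ∀ p, Measurable (haarSystem p)
  | none => measurable_const
  | some (j, k) => measurable_haar j k

theorem memLp_haarSystem {μ : Measure ℝ} [IsFiniteMeasure μ] (q : ENNReal) :
    ∀ p, MemLp (haarSystem p) q μ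
  | none => memLp_const 1
  | some (j, k) => memLp_haar q j k

theorem integral_haarSystem_mul :
    ∀ {p q}, IsHaarIndex p → IsHaarIndex q →
      ∫ x, haarSystem p x * haarSystem q x ∂μ₀₁ = if p = q then 1 else 0
  | none, none, _, _ => by simp [haarSystem]
  | none, some (j, k), _, ⟨hk₀, hk⟩ => by simp [haarSystem, integral_haar hk₀ hk]
  | some (j, k), none, ⟨hk₀, hk⟩, _ => by simp [haarSystem, integral_haar hk₀ hk]
  | some (j, k), some (j', k'), ⟨hk₀, hk⟩, ⟨hk₀', hk'⟩ => by
    simp only [haarSystem, integral_haar_mul_haar hk₀ hk hk₀' hk', Option.some.injEq]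

theorem eq_of_haarSystem_ne_zero {x : ℝ} :
    ∀ {p q}, haarSystem p x ≠ 0 → haarSystem q x ≠ 0 →
      p.map Prod.fst = q.map Prod.fst → p = q
  | none, none, _, _, _ => rfl
  | some (j, k), some (j', k'), hp, hq, h => by
    obtain rfl : j = j' := by simpa using h
    have := (mem_dyadicInterval_iff.1 (mem_dyadicInterval_of_haar_ne_zero hp)).symm.trans
      (mem_dyadicInterval_iff.1 (mem_dyadicInterval_of_haar_ne_zero hq))
    rw [this]

section Completeness

variable {E : Type*} [NormedAddCommGroup E] [NormedSpace ℝ E] [CompleteSpace E]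

theorem MeasureTheory.Integrable.ae_eq_zero_of_forall_setIntegral_generateFrom {α : Type*}
    {m : MeasurableSpace α} {μ : Measure α} {f : α → E} {S : Set (Set α)}
    (hf : Integrable f μ) (hgen : m = .generateFrom S) (hS : IsPiSystem S)
    (huniv : ∫ x, f x ∂μ = 0) (hzero : ∀ s ∈ S, ∫ x in s, f x ∂μ = 0) : f =ᵐ[μ] 0 := by
  suffices ∀ s, MeasurableSet s → ∫ x in s, f x ∂μ = 0 from
    hf.ae_eq_zero_of_forall_setIntegral_eq_zero fun s hs _ => this s hs
  intro s hs
  induction s, hs using MeasurableSpace.induction_on_inter hgen hS with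
  | empty => simp
  | basic s hs => exact hzero s hs
  | compl s hs ih =>
    have := integral_add_compl hs hf
    rwa [ih, zero_add, huniv] at this
  | iUnion s hdisj hs ih => simp [integral_iUnion hs hdisj hf.integrableOn, ih]

variable {g : ℝ → ℝ}

theorem setIntegral_dyadicInterval_eq_zero (hg : Integrable g μ₀₁) (h₁ : ∫ x, g x ∂μ₀₁ = 0)
    (hhaar : ∀ j k, 0 ≤ k → k < 2 ^ j → ∫ x, g x * haar j k x ∂μ₀₁ = 0) (j : ℕ) (k : ℤ) :
    ∫ x in dyadicInterval j k, g x ∂μ₀₁ = 0 := by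
  induction j generalizing k with
  | zero =>
    by_cases hk : k = 0
    · subst hk
      have : (μ₀₁).restrict (dyadicInterval 0 0) = μ₀₁ := by
        rw [Measure.restrict_restrict (measurableSet_dyadicInterval 0 0)]
        simp only [dyadicInterval, Int.cast_zero, zero_add, pow_zero, div_one]
        rw [inter_eq_left.2 Ico_subset_Icc_self]
        exact Measure.restrict_congr_set Ico_ae_eq_Icc
      rw [this, h₁]
    · exact setIntegral_measure_zero _ (volume_restrict_dyadicInterval_eq_zero (by omega))
  | succ j ih =>
    obtain ⟨k, rfl | rfl⟩ := Int.even_or_odd' k <;>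
    · have hsum : (∫ x in dyadicInterval (j + 1) (2 * k), g x ∂μ₀₁) +
          ∫ x in dyadicInterval (j + 1) (2 * k + 1), g x ∂μ₀₁ = 0 := by
        rw [← setIntegral_union (disjoint_dyadicInterval (by omega))
          (measurableSet_dyadicInterval _ _) hg.integrableOn hg.integrableOn,
          dyadicInterval_union, ih]
      have hdiff : (∫ x in dyadicInterval (j + 1) (2 * k), g x ∂μ₀₁) =
          ∫ x in dyadicInterval (j + 1) (2 * k + 1), g x ∂μ₀₁ := by
        by_cases hk : 0 ≤ k ∧ k < 2 ^ j
        · have h := integral_mul_haar hg j k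
          rw [hhaar j k hk.1 hk.2, eq_comm, mul_eq_zero, sub_eq_zero] at h
          exact h.resolve_left (by positivity)
        · rw [setIntegral_measure_zero _ (volume_restrict_dyadicInterval_eq_zero (by omega)),
            setIntegral_measure_zero _ (volume_restrict_dyadicInterval_eq_zero (by omega))]
      linarith

theorem setIntegral_Ico_dyadic_eq_zero (hg : Integrable g μ₀₁)
    (hdyadic : ∀ j k, ∫ x in dyadicInterval j k, g x ∂μ₀₁ = 0) (J : ℕ) {a b : ℤ} (hab : a ≤ b) :
    ∫ x in Ico (a / 2 ^ J : ℝ) (b / 2 ^ J), g x ∂μ₀₁ = 0 := by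
  induction b, hab using Int.leInduction with
  | base => simp
  | succ b hab ih =>
    have hb := hdyadic J b
    rw [dyadicInterval] at hb
    have hunion : Ico (a / 2 ^ J : ℝ) (b / 2 ^ J) ∪ Ico (b / 2 ^ J : ℝ) ((b + 1) / 2 ^ J) =
        Ico (a / 2 ^ J : ℝ) ((b + 1) / 2 ^ J) :=
      Ico_union_Ico_eq_Ico (by gcongr) (by gcongr; simp)
    rw [Int.cast_add, Int.cast_one, ← hunion, setIntegral_union Ico_disjoint_Ico_same
      measurableSet_Ico hg.integrableOn hg.integrableOn, ih, hb, add_zero]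

theorem dense_dyadic : Dense {x : ℝ | ∃ (J : ℕ) (a : ℤ), a / 2 ^ J = x} := by
  refine dense_of_exists_between fun x y hxy => ?_
  obtain ⟨J, hJ⟩ := exists_pow_lt_of_lt_one (sub_pos.2 hxy) (by norm_num : (1 / 2 : ℝ) < 1)
  have h2 : (0 : ℝ) < 2 ^ J := by positivity
  have hJ' : 1 < (y - x) * 2 ^ J := by
    rwa [one_div, inv_pow, inv_lt_iff_one_lt_mul₀ h2] at hJ
  refine ⟨(⌊2 ^ J * x⌋ + 1 : ℤ) / 2 ^ J, ⟨J, _, rfl⟩, ?_, ?_⟩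
  · rw [lt_div_iff₀ h2]
    push_cast
    linarith [Int.lt_floor_add_one (2 ^ J * x)]
  · rw [div_lt_iff₀ h2]
    push_cast
    linarith [Int.floor_le (2 ^ J * x)]

theorem haarSystem_complete (hg : Integrable g μ₀₁)
    (horth : ∀ p, IsHaarIndex p → ∫ x, g x * haarSystem p x ∂μ₀₁ = 0) : g =ᵐ[μ₀₁] 0 := by
  have h₁ : ∫ x, g x ∂μ₀₁ = 0 := by simpa [haarSystem] using horth none trivial
  have hdyadic := setIntegral_dyadicInterval_eq_zero hg h₁ fun j k hk₀ hk =>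
    horth (some (j, k)) ⟨hk₀, hk⟩
  have hden : ∀ (J J' : ℕ) (a : ℤ), (a / 2 ^ J : ℝ) = ((a * 2 ^ J' : ℤ) : ℝ) / 2 ^ (J + J') :=
    fun J J' a => by
      push_cast
      rw [pow_add]
      field_simp
  refine hg.ae_eq_zero_of_forall_setIntegral_generateFrom
    (BorelSpace.measurable_eq.trans dense_dyadic.borel_eq_generateFrom_Ico_mem)
    (isPiSystem_Ico_mem _ _) h₁ ?_
  rintro _ ⟨_, ⟨J, a, rfl⟩, _, ⟨J', b, rfl⟩, hlt, rfl⟩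
  rw [hden J J' a, hden J' J b, add_comm J'] at hlt ⊢
  refine setIntegral_Ico_dyadic_eq_zero hg hdyadic _ ?_
  exact_mod_cast (div_lt_div_iff_of_pos_right (by positivity)).1 hlt |>.le

end Completeness

section Blocks

variable (s : ℕ → ℕ)

def blockStart (k : ℕ) : ℕ := ∑ i ∈ Finset.range k, s i

def blockIndex (n : ℕ) : ℕ := Nat.findGreatest (fun k => blockStart s k ≤ n) n

variable {s}

theorem blockStart_succ (k : ℕ) : blockStart s (k + 1) = blockStart s k + s k :=
  Finset.sum_range_succ _ _

theorem blockStart_mono : Monotone (blockStart s) := fun _ _ h =>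
  Finset.sum_le_sum_of_subset (Finset.range_mono h)

theorem le_blockStart_of_lt {i k : ℕ} (h : i < k) : s i ≤ blockStart s k :=
  Finset.single_le_sum (fun _ _ => Nat.zero_le _) (Finset.mem_range.2 h)

theorem self_le_blockStart (hs : ∀ k, 0 < s k) (k : ℕ) : k ≤ blockStart s k := by
  induction k with
  | zero => exact Nat.zero_le _
  | succ k ih => rw [blockStart_succ]; have := hs k; omega

theorem blockStart_blockIndex_le (n : ℕ) : blockStart s (blockIndex s n) ≤ n :=
  Nat.findGreatest_spec (P := fun k => blockStart s k ≤ n) (Nat.zero_le n) (Nat.zero_le n)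

theorem le_blockIndex (hs : ∀ k, 0 < s k) {k n : ℕ} (h : blockStart s k ≤ n) :
    k ≤ blockIndex s n :=
  Nat.le_findGreatest ((self_le_blockStart hs k).trans h) h

theorem lt_blockStart_blockIndex_succ (hs : ∀ k, 0 < s k) (n : ℕ) :
    n < blockStart s (blockIndex s n + 1) := by
  by_contra! h
  have := le_blockIndex hs h
  omega

theorem blockIndex_eq (hs : ∀ k, 0 < s k) {k n : ℕ} (h₁ : blockStart s k ≤ n)
    (h₂ : n < blockStart s (k + 1)) : blockIndex s n = k := by
  refine le_antisymm ?_ (le_blockIndex hs h₁)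
  by_contra! h
  have := (blockStart_mono (show k + 1 ≤ blockIndex s n from h)).trans (blockStart_blockIndex_le n)
  omega

theorem blockIndex_mono : Monotone (blockIndex s) := fun _ _ h =>
  Nat.findGreatest_mono (fun _ hk => hk.trans h) h

end Blocks

section Reindexing

variable (σ : ℕ ≃ ℕ)

def haarBlockSize : ℕ → ℕ
  | 0 => 2
  | k + 1 => 2 ^ σ k

theorem haarBlockSize_pos : ∀ k, 0 < haarBlockSize σ k
  | 0 => two_pos
  | _ + 1 => by simp [haarBlockSize]

/-- Block `0` holds the indices `0` and `1`, which carry the constant function, and block `k + 1`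
lists the `2 ^ σ k` Haar functions of level `σ k`. -/
def haarIndex (n : ℕ) : Option (ℕ × ℤ) :=
  match blockIndex (haarBlockSize σ) n with
  | 0 => none
  | k + 1 => some (σ k, ((n - blockStart (haarBlockSize σ) (k + 1) : ℕ) : ℤ))

variable {σ}

theorem haarIndex_of_blockIndex_eq_zero {n : ℕ} (h : blockIndex (haarBlockSize σ) n = 0) :
    haarIndex σ n = none := by
  simp [haarIndex, h]

theorem haarIndex_of_blockIndex_eq_succ {n k : ℕ} (h : blockIndex (haarBlockSize σ) n = k + 1) :
    haarIndex σ n = some (σ k, ((n - blockStart (haarBlockSize σ) (k + 1) : ℕ) : ℤ)) := by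
  simp [haarIndex, h]

theorem isHaarIndex_haarIndex (n : ℕ) : IsHaarIndex (haarIndex σ n) := by
  rcases hb : blockIndex (haarBlockSize σ) n with _ | k
  · rw [haarIndex_of_blockIndex_eq_zero hb]
    trivial
  · rw [haarIndex_of_blockIndex_eq_succ hb]
    have h₁ := blockStart_blockIndex_le (s := haarBlockSize σ) n
    have h₂ := lt_blockStart_blockIndex_succ (haarBlockSize_pos σ) n
    rw [hb] at h₁ h₂
    rw [blockStart_succ (k + 1)] at h₂
    simp only [haarBlockSize] at h₂
    exact ⟨Int.natCast_nonneg _, by exact_mod_cast (by omega : n - _ < 2 ^ σ k)⟩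

theorem haarIndex_injOn : InjOn (haarIndex σ) (Ici 1) := by
  intro m hm n hn h
  have hm₁ := blockStart_blockIndex_le (s := haarBlockSize σ) m
  have hn₁ := blockStart_blockIndex_le (s := haarBlockSize σ) n
  have hm₂ := lt_blockStart_blockIndex_succ (haarBlockSize_pos σ) m
  have hn₂ := lt_blockStart_blockIndex_succ (haarBlockSize_pos σ) n
  rcases hbm : blockIndex (haarBlockSize σ) m with _ | k <;>
    rcases hbn : blockIndex (haarBlockSize σ) n with _ | k'
  · simp only [hbm, hbn, mem_Ici] at *
    change m < 2 at hm₂; change n < 2 at hn₂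
    omega
  · simp [haarIndex_of_blockIndex_eq_zero hbm, haarIndex_of_blockIndex_eq_succ hbn] at h
  · simp [haarIndex_of_blockIndex_eq_succ hbm, haarIndex_of_blockIndex_eq_zero hbn] at h
  · simp only [haarIndex_of_blockIndex_eq_succ hbm, haarIndex_of_blockIndex_eq_succ hbn,
      Option.some.injEq, Prod.mk.injEq, EmbeddingLike.apply_eq_iff_eq, Nat.cast_inj] at h
    obtain ⟨rfl, h⟩ := h
    rw [hbm] at hm₁
    rw [hbn] at hn₁
    omega

theorem exists_haarIndex_eq {p : Option (ℕ × ℤ)} (hp : IsHaarIndex p) :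
    ∃ n ∈ Ici 1, haarIndex σ n = p := by
  have hs := haarBlockSize_pos σ
  rcases p with _ | ⟨j, k⟩
  · refine ⟨1, mem_Ici.2 le_rfl, haarIndex_of_blockIndex_eq_zero (blockIndex_eq hs ?_ ?_)⟩ <;>
      simp [blockStart, haarBlockSize]
  · obtain ⟨hk₀, hk⟩ := hp
    set t := σ.symm j
    have hk' : k.toNat < 2 ^ σ t := by
      rw [σ.apply_symm_apply]
      have : k < ((2 ^ j : ℕ) : ℤ) := by exact_mod_cast hk
      omega
    refine ⟨blockStart (haarBlockSize σ) (t + 1) + k.toNat, ?_, ?_⟩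
    · have := le_blockStart_of_lt (s := haarBlockSize σ) (by omega : 0 < t + 1)
      simp only [haarBlockSize, mem_Ici] at this ⊢
      omega
    · rw [haarIndex_of_blockIndex_eq_succ (blockIndex_eq hs (Nat.le_add_right _ _) ?_)]
      · simp [σ.apply_symm_apply, t, Int.toNat_of_nonneg hk₀]
      · rw [blockStart_succ (t + 1)]
        simp only [haarBlockSize]
        omega

open scoped Finset in
theorem card_filter_haarSystem_ne_zero_le (x : ℝ) (N : ℕ) :
    #{n ∈ Finset.Icc 1 N | haarSystem (haarIndex σ n) x ≠ 0} ≤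
      blockIndex (haarBlockSize σ) N + 1 := by
  refine (Finset.card_le_card_of_injOn (blockIndex (haarBlockSize σ)) (fun n hn => ?_)
    (fun n hn m hm h => ?_)).trans (Finset.card_range _).le
  · simp only [Finset.coe_filter, Finset.mem_Icc, mem_ofPred_eq] at hn
    simpa [Nat.lt_succ_iff] using blockIndex_mono hn.1.2
  · simp only [Finset.coe_filter, Finset.mem_Icc, mem_ofPred_eq] at hn hm
    refine haarIndex_injOn hn.1.1 hm.1.1 (eq_of_haarSystem_ne_zero hn.2 hm.2 ?_)
    have h' : blockIndex (haarBlockSize σ) n = blockIndex (haarBlockSize σ) m := h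
    rcases hb : blockIndex (haarBlockSize σ) m with _ | k
    · simp [haarIndex_of_blockIndex_eq_zero hb, haarIndex_of_blockIndex_eq_zero (h'.trans hb)]
    · simp [haarIndex_of_blockIndex_eq_succ hb, haarIndex_of_blockIndex_eq_succ (h'.trans hb)]

end Reindexing

theorem Equiv.exists_le_apply_two_mul (F : ℕ → ℕ) : ∃ σ : ℕ ≃ ℕ, ∀ t, F t ≤ σ (2 * t) := by
  classical
  set T : ℕ → ℕ := fun t => 2 * ∑ i ∈ Finset.range (t + 1), (F i + 1)
  have hT : StrictMono T := strictMono_nat_of_lt_succ fun t => by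
    simp only [T, Finset.sum_range_succ _ (t + 1)]
    omega
  have hF : ∀ t, F t ≤ T t := fun t => by
    have := Finset.single_le_sum (f := fun i => F i + 1) (fun _ _ => Nat.zero_le _)
      (Finset.self_mem_range_succ t)
    simp only [T]
    omega
  have hcompl : (range T)ᶜ.Infinite :=
    infinite_of_injective_forall_mem (f := fun n => 2 * n + 1) (fun _ _ h => by simpa using h)
      fun n ⟨t, ht⟩ => by simp only [T] at ht; omega
  have := hcompl.to_subtype
  -- `σ` maps the even numbers onto `range T` and the odd numbers onto its complement.
  refine ⟨Equiv.natSumNatEquivNat.symm.trans (((Equiv.ofInjective T hT.injective).sumCongr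
    (Nat.Subtype.orderIsoOfNat _).toEquiv).trans (Equiv.Set.sumCompl _)), fun t => ?_⟩
  simpa [Equiv.natSumNatEquivNat_symm_apply] using hF t

theorem exists_blockIndex_lt_and_le {σ : ℕ ≃ ℕ} {M : ℕ → ℕ}
    (hσ : ∀ t, M (2 * t + 4) ≤ σ (2 * t)) {N : ℕ} (hN : blockStart (haarBlockSize σ) 2 ≤ N) :
    ∃ m, blockIndex (haarBlockSize σ) N + 1 ≤ m ∧ M m ≤ N := by
  set k := blockIndex (haarBlockSize σ) N
  have hk : 2 ≤ k := le_blockIndex (haarBlockSize_pos σ) hN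
  -- the block `2 t + 1` preceding block `k` alone has `2 ^ σ (2 t) > M (2 t + 4)` elements
  refine ⟨2 * ((k - 2) / 2) + 4, by omega, ?_⟩
  calc M (2 * ((k - 2) / 2) + 4) ≤ σ (2 * ((k - 2) / 2)) := hσ _
    _ ≤ haarBlockSize σ (2 * ((k - 2) / 2) + 1) := Nat.lt_two_pow_self.le
    _ ≤ blockStart (haarBlockSize σ) k := le_blockStart_of_lt (by omega)
    _ ≤ N := blockStart_blockIndex_le N

theorem exists_equiv_eventually_sqrt_blockIndex_le {v : ℕ → ℝ} (hv : Tendsto v atTop atTop) :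
    ∃ σ : ℕ ≃ ℕ, ∀ᶠ N in atTop, √(blockIndex (haarBlockSize σ) N + 1 : ℝ) ≤ v N := by
  choose M hM using fun m : ℕ => eventually_atTop.1 (hv.eventually_ge_atTop √(m : ℝ))
  obtain ⟨σ, hσ⟩ := Equiv.exists_le_apply_two_mul fun t => M (2 * t + 4)
  refine ⟨σ, eventually_atTop.2 ⟨blockStart (haarBlockSize σ) 2, fun N hN => ?_⟩⟩
  obtain ⟨m, hkm, hmN⟩ := exists_blockIndex_lt_and_le hσ hN
  exact (Real.sqrt_le_sqrt (by exact_mod_cast hkm)).trans (hM m N hmN)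

end

theorem exists_complete_ons_slow_sq_var_growth_general (w : ℕ → ℝ)
    (hw_top : Filter.Tendsto w Filter.atTop Filter.atTop) :
    ∃ (φ : ℕ → ℝ → ℝ) (C : ℝ), 0 < C ∧
      (∀ n, Measurable (φ n)) ∧
      (∀ n, 1 ≤ n → MemLp (φ n) 2 (volume.restrict (Set.Icc (0:ℝ) 1))) ∧
      (∀ m n, 1 ≤ m → 1 ≤ n →
        (∫ x in Set.Icc (0:ℝ) 1, φ m x * φ n x) = if m = n then (1:ℝ) else 0) ∧
      (∀ g : ℝ → ℝ,
        MemLp g 2 (volume.restrict (Set.Icc (0:ℝ) 1)) →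
        (∀ n, 1 ≤ n → (∫ x in Set.Icc (0:ℝ) 1, g x * φ n x) = 0) →
        g =ᵐ[volume.restrict (Set.Icc (0:ℝ) 1)] 0) ∧
      ∃ N₀ : ℕ, ∀ N, N₀ ≤ N → ∀ a : ℕ → ℝ,
        Real.sqrt (∫ x in Set.Icc (0:ℝ) 1, (sqVar N fun n => a n * φ n x) ^ 2)
          ≤ C * w N * Real.sqrt (∑ n ∈ Finset.Icc 1 N, a n ^ 2) := by
  obtain ⟨σ, hσ⟩ := exists_equiv_eventually_sqrt_blockIndex_le hw_top
  obtain ⟨N₀, hN₀⟩ := eventually_atTop.1 hσ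
  have horth : ∀ m n, 1 ≤ m → 1 ≤ n → ∫ x in Icc (0 : ℝ) 1, haarSystem (haarIndex σ m) x *
      haarSystem (haarIndex σ n) x = if m = n then 1 else 0 := fun m n hm hn => by
    rw [integral_haarSystem_mul (isHaarIndex_haarIndex m) (isHaarIndex_haarIndex n)]
    exact if_congr (haarIndex_injOn.eq_iff hm hn) rfl rfl
  refine ⟨fun n => haarSystem (haarIndex σ n), 1, one_pos, fun n => measurable_haarSystem _,
    fun n _ => memLp_haarSystem 2 _, horth, fun g hg hgφ => ?_, N₀, fun N hN a => ?_⟩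
  · refine haarSystem_complete (hg.integrable one_le_two) fun p hp => ?_
    obtain ⟨n, hn, rfl⟩ := exists_haarIndex_eq (σ := σ) hp
    exact hgφ n hn
  · calc √(∫ x in Icc (0 : ℝ) 1, sqVar N (fun n => a n * haarSystem (haarIndex σ n) x) ^ 2)
        ≤ √((blockIndex (haarBlockSize σ) N + 1 : ℕ) : ℝ) * √(∑ n ∈ Finset.Icc 1 N, a n ^ 2) :=
          sqrt_integral_sqVar_sq_le (fun n _ => memLp_haarSystem 2 _)
            (fun n hn => by
              simpa [sq] using horth n n (Finset.mem_Icc.1 hn).1 (Finset.mem_Icc.1 hn).1)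
            (card_filter_haarSystem_ne_zero_le (σ := σ) · N) a
      _ ≤ 1 * w N * √(∑ n ∈ Finset.Icc 1 N, a n ^ 2) := by
          rw [one_mul]
          gcongr
          exact_mod_cast hN₀ N hN

theorem exists_complete_ons_slow_sq_var_growth (w : ℕ → ℝ)
    (hw_pos : ∀ n, 0 < w n) (hw_mono : Monotone w)
    (hw_top : Filter.Tendsto w Filter.atTop Filter.atTop) :
    ∃ (φ : ℕ → ℝ → ℝ) (C : ℝ), 0 < C ∧
      (∀ n, Measurable (φ n)) ∧
      (∀ n, 1 ≤ n → MemLp (φ n) 2 (volume.restrict (Set.Icc (0:ℝ) 1))) ∧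
      (∀ m n, 1 ≤ m → 1 ≤ n →
        (∫ x in Set.Icc (0:ℝ) 1, φ m x * φ n x) = if m = n then (1:ℝ) else 0) ∧
      (∀ g : ℝ → ℝ,
        MemLp g 2 (volume.restrict (Set.Icc (0:ℝ) 1)) →
        (∀ n, 1 ≤ n → (∫ x in Set.Icc (0:ℝ) 1, g x * φ n x) = 0) →
        g =ᵐ[volume.restrict (Set.Icc (0:ℝ) 1)] 0) ∧
      ∃ N₀ : ℕ, ∀ N, N₀ ≤ N → ∀ a : ℕ → ℝ,
        Real.sqrt (∫ x in Set.Icc (0:ℝ) 1, (sqVar N fun n => a n * φ n x) ^ 2)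
          ≤ C * w N * Real.sqrt (∑ n ∈ Finset.Icc 1 N, a n ^ 2) :=
  exists_complete_ons_slow_sq_var_growth_general w hw_top
end

section
/- There exists an absolute constant C > 0 with the following property. Let j ≥ 0 be an integer and let c_1, …, c_m be complex numbers with 2^{−j−1} < |c_i|² ≤ 2^{−j} for all i. Let X_1, X_2, … be independent random variables, each uniformly distributed on the list (c_1, …, c_m) (i.e., X equals c_U where U is uniform on {1, …, m}). For a subinterval I ⊆ {1, …, k}, let S_I := ∑_{i ∈ I} X_i. Then for every positive integer k and every real p > 2, 𝔼[ max_{I ⊆ {1,…,k}} |S_I − 𝔼[S_I]|^p ] ≤ C^p · k^{p/2} · p^{p/2} · 2^{−jp/2}, where the maximum is over all subintervals I of {1, …, k}. -/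
/-!
Centre the summands and split them into real and imaginary parts. These lie in `[-σ, σ]` with
`σ² = 2^{-j}`, so by Hoeffding's lemma each part is an independent sequence of mean-zero
sub-Gaussian variables with variance proxy `σ²`. For such a sequence `exp (l Sₙ)` is a nonnegative
submartingale, and Doob's maximal inequality upgrades the Chernoff bound for `Sₖ` to the running
maximum: `P(max_{n ≤ k} |Sₙ| ≥ t) ≤ 2 exp (-t² / (2kσ²))`. Integrating this tail against `p t^{p-1}`
gives `E (max_{n ≤ k} |Sₙ|)^p ≤ p (2kσ²)^{p/2} Γ(p/2) ≤ p (kσ²p)^{p/2}`. Every interval sum is a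
difference of two prefix sums.
-/

open MeasureTheory ProbabilityTheory Real Finset
open scoped NNReal ENNReal

theorem Real.Gamma_le_rpow_self {x : ℝ} (hx : 1 ≤ x) : Gamma x ≤ x ^ x := by
  set m := ⌊x⌋₊
  have hm : (m : ℝ) ≤ x := Nat.floor_le (by linarith)
  have hxm : x ∈ Set.Icc 1 ((m : ℝ) + 1) := ⟨hx, (Nat.lt_floor_add_one x).le⟩
  calc Gamma x ≤ max (Gamma 1) (Gamma (m + 1)) :=
        convexOn_Gamma.le_max_of_mem_Icc (by simp) (by simp; positivity) hxm
    _ ≤ x ^ x := by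
      rw [Gamma_one, Gamma_nat_eq_factorial]
      refine max_le (one_le_rpow hx (by linarith)) ?_
      calc (m.factorial : ℝ) ≤ (m : ℝ) ^ (m : ℝ) := by
            rw [rpow_natCast]; exact_mod_cast Nat.factorial_le_pow m
        _ ≤ x ^ (m : ℝ) := by gcongr
        _ ≤ x ^ x := rpow_le_rpow_of_exponent_le hx hm

theorem Real.rpow_add_le_mul_rpow_add_rpow {a b : ℝ} (ha : 0 ≤ a) (hb : 0 ≤ b) {p : ℝ}
    (hp : 1 ≤ p) : (a + b) ^ p ≤ 2 ^ (p - 1) * (a ^ p + b ^ p) := by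
  lift a to ℝ≥0 using ha
  lift b to ℝ≥0 using hb
  exact_mod_cast NNReal.rpow_add_le_mul_rpow_add_rpow a b hp

theorem Real.self_le_two_rpow {p : ℝ} (hp : 1 ≤ p) : p ≤ 2 ^ p := by
  have := one_add_mul_self_le_rpow_one_add (s := 1) (by norm_num) hp
  norm_num at this
  linarith

theorem Finset.sum_Ioc_eq_sum_Ico_add_one {M : Type*} [AddCommMonoid M] (f : ℕ → M) (u v : ℕ) :
    ∑ i ∈ Ioc u v, f i = ∑ i ∈ Ico u v, f (i + 1) := by
  rw [sum_Ico_add' f, ← Order.succ_eq_add_one, ← Order.succ_eq_add_one, Ico_succ_succ_eq_Ioc]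

theorem lintegral_ofReal_rpow_le_of_measureReal_ge_le {Ω : Type*} [MeasurableSpace Ω]
    {μ : Measure Ω} [IsFiniteMeasure μ] {M : Ω → ℝ} (hM : AEMeasurable M μ) (hM0 : 0 ≤ᵐ[μ] M)
    {a s p : ℝ} (hs : 0 < s) (hp : 0 < p)
    (htail : ∀ t > 0, μ.real {ω | t ≤ M ω} ≤ a * exp (-t ^ 2 / (2 * s))) :
    ∫⁻ ω, ENNReal.ofReal (M ω ^ p) ∂μ
      ≤ ENNReal.ofReal (a * p * (2 * s) ^ (p / 2) * Gamma (p / 2) / 2) := by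
  have hq : -1 < p - 1 := by linarith
  have hb : 0 < (2 * s)⁻¹ := by positivity
  have ha : 0 ≤ a :=
    nonneg_of_mul_nonneg_left (measureReal_nonneg.trans (htail 1 one_pos)) (exp_pos _)
  have hg_nn : ∀ t, 0 < t → 0 ≤ p * t ^ (p - 1) := fun t ht => by positivity
  have hG : ∀ y, 0 ≤ y → ∫ t in (0 : ℝ)..y, p * t ^ (p - 1) = y ^ p := fun y hy => by
    rw [intervalIntegral.integral_const_mul, integral_rpow (Or.inl hq), sub_add_cancel,
      zero_rpow hp.ne', sub_zero]
    field_simp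
  calc ∫⁻ ω, ENNReal.ofReal (M ω ^ p) ∂μ
      = ∫⁻ ω, ENNReal.ofReal (∫ t in (0 : ℝ)..M ω, p * t ^ (p - 1)) ∂μ :=
        lintegral_congr_ae (by filter_upwards [hM0] with ω hω using by rw [hG _ hω])
    _ = ∫⁻ t in Set.Ioi 0, μ {ω | t ≤ M ω} * ENNReal.ofReal (p * t ^ (p - 1)) :=
        lintegral_comp_eq_lintegral_meas_le_mul μ hM0 hM
          (fun t _ => (intervalIntegral.intervalIntegrable_rpow' hq).const_mul p)
          ((ae_restrict_mem measurableSet_Ioi).mono hg_nn)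
    _ ≤ ∫⁻ t in Set.Ioi 0,
          ENNReal.ofReal (a * p * (t ^ (p - 1) * exp (-(2 * s)⁻¹ * t ^ (2 : ℝ)))) := by
        refine lintegral_mono_ae ((ae_restrict_mem measurableSet_Ioi).mono fun t ht => ?_)
        rw [← ofReal_measureReal, ← ENNReal.ofReal_mul' (hg_nn t ht)]
        refine ENNReal.ofReal_le_ofReal ?_
        calc μ.real {ω | t ≤ M ω} * (p * t ^ (p - 1))
            ≤ a * exp (-t ^ 2 / (2 * s)) * (p * t ^ (p - 1)) := by
              gcongr; exacts [hg_nn t ht, htail t ht]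
          _ = _ := by rw [rpow_two]; ring_nf
    _ = ENNReal.ofReal (a * p * (2 * s) ^ (p / 2) * Gamma (p / 2) / 2) := by
        rw [← ofReal_integral_eq_lintegral_ofReal, integral_const_mul,
          integral_rpow_mul_exp_neg_mul_rpow two_pos hq hb, sub_add_cancel]
        · congr 1
          rw [inv_rpow (by positivity), ← rpow_neg (by positivity), neg_div, neg_neg]
          ring
        · exact (integrableOn_rpow_mul_exp_neg_mul_rpow hq two_pos hb).const_mul _
        · filter_upwards [ae_restrict_mem measurableSet_Ioi] with t (ht : 0 < t)
          positivity

section MaxAbsPartialSum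

variable {Ω : Type*}

def maxAbsPartialSum (Z : ℕ → Ω → ℝ) (n : ℕ) (ω : Ω) : ℝ :=
  (range (n + 1)).sup' nonempty_range_add_one fun k => |∑ i ∈ range (k + 1), Z i ω|

theorem maxAbsPartialSum_nonneg (Z : ℕ → Ω → ℝ) (n : ℕ) (ω : Ω) :
    0 ≤ maxAbsPartialSum Z n ω :=
  (abs_nonneg _).trans (Finset.le_sup' (fun k => |∑ i ∈ range (k + 1), Z i ω|)
    (mem_range.2 n.succ_pos))

theorem measurable_maxAbsPartialSum [MeasurableSpace Ω] {Z : ℕ → Ω → ℝ}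
    (hZ : ∀ i, Measurable (Z i)) (n : ℕ) : Measurable (maxAbsPartialSum Z n) :=
  measurable_range_sup'' fun _ _ => (Finset.measurable_sum _ fun i _ => hZ i).abs

theorem norm_sum_Ico_le_maxAbsPartialSum (D : ℕ → Ω → ℂ) {n u v : ℕ} (huv : u ≤ v)
    (hv : v ≤ n + 1) (ω : Ω) :
    ‖∑ i ∈ Ico u v, D i ω‖ ≤ 2 * (maxAbsPartialSum (fun i ω => Complex.reCLM (D i ω)) n ω
      + maxAbsPartialSum (fun i ω => Complex.imCLM (D i ω)) n ω) := by
  have hprefix : ∀ w ≤ n + 1, ‖∑ i ∈ range w, D i ω‖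
      ≤ maxAbsPartialSum (fun i ω => Complex.reCLM (D i ω)) n ω
        + maxAbsPartialSum (fun i ω => Complex.imCLM (D i ω)) n ω := by
    rintro (_ | k) hk
    · simpa using add_nonneg (maxAbsPartialSum_nonneg _ n ω) (maxAbsPartialSum_nonneg _ n ω)
    · have hk' : k ∈ range (n + 1) := mem_range.2 (by omega)
      calc ‖∑ i ∈ range (k + 1), D i ω‖
          ≤ |(∑ i ∈ range (k + 1), D i ω).re| + |(∑ i ∈ range (k + 1), D i ω).im| :=
            Complex.norm_le_abs_re_add_abs_im _
        _ ≤ _ := by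
          rw [Complex.re_sum, Complex.im_sum]
          exact add_le_add
            (Finset.le_sup' (fun k => |∑ i ∈ range (k + 1), (D i ω).re|) hk')
            (Finset.le_sup' (fun k => |∑ i ∈ range (k + 1), (D i ω).im|) hk')
  rw [sum_Ico_eq_sub _ huv]
  linarith [norm_sub_le (∑ i ∈ range v, D i ω) (∑ i ∈ range u, D i ω), hprefix v hv,
    hprefix u (huv.trans hv)]

theorem sSup_norm_sum_Ico_rpow_le (D : ℕ → Ω → ℂ) (n : ℕ) {p : ℝ} (hp : 1 ≤ p) (ω : Ω) :
    sSup {r : ℝ | ∃ u v : ℕ, u ≤ v ∧ v ≤ n + 1 ∧ r = ‖∑ i ∈ Ico u v, D i ω‖ ^ p}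
      ≤ 2 ^ p * 2 ^ (p - 1) * (maxAbsPartialSum (fun i ω => Complex.reCLM (D i ω)) n ω ^ p
        + maxAbsPartialSum (fun i ω => Complex.imCLM (D i ω)) n ω ^ p) := by
  have hre := maxAbsPartialSum_nonneg (fun i ω => Complex.reCLM (D i ω)) n ω
  have him := maxAbsPartialSum_nonneg (fun i ω => Complex.imCLM (D i ω)) n ω
  refine Real.sSup_le ?_ (by positivity)
  rintro r ⟨u, v, huv, hv, rfl⟩
  calc ‖∑ i ∈ Ico u v, D i ω‖ ^ p
      ≤ (2 * (maxAbsPartialSum (fun i ω => Complex.reCLM (D i ω)) n ω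
          + maxAbsPartialSum (fun i ω => Complex.imCLM (D i ω)) n ω)) ^ p :=
        rpow_le_rpow (norm_nonneg _) (norm_sum_Ico_le_maxAbsPartialSum D huv hv ω) (by linarith)
    _ ≤ _ := by
        rw [mul_rpow zero_le_two (add_nonneg hre him), mul_assoc]
        gcongr
        exact Real.rpow_add_le_mul_rpow_add_rpow hre him hp

end MaxAbsPartialSum

section PartialSums

variable {Ω : Type*} [MeasurableSpace Ω] {μ : Measure Ω} [IsProbabilityMeasure μ]

theorem one_le_mgf_of_integral_eq_zero {Y : Ω → ℝ} (hY : Integrable Y μ)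
    (hmean : μ[Y] = 0) {l : ℝ} (hexp : Integrable (fun ω => exp (l * Y ω)) μ) :
    1 ≤ mgf Y μ l := by
  calc (1 : ℝ) = ∫ ω, (1 + l * Y ω) ∂μ := by
        rw [integral_add (integrable_const _) (hY.const_mul l), integral_const_mul, hmean]
        simp
    _ ≤ mgf Y μ l := integral_mono ((integrable_const _).add (hY.const_mul l)) hexp
        fun ω => by linarith [add_one_le_exp (l * Y ω)]

variable {Z : ℕ → Ω → ℝ} {c : ℝ≥0}

theorem submartingale_exp_mul_sum_range (hZ : ∀ i, Measurable (Z i)) (hind : iIndepFun Z μ)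
    (hsub : ∀ i, HasSubgaussianMGF (Z i) c μ) (hmean : ∀ i, μ[Z i] = 0) (l : ℝ) :
    Submartingale (fun n ω => exp (l * ∑ i ∈ range (n + 1), Z i ω))
      (Filtration.natural Z fun i => (hZ i).stronglyMeasurable) μ := by
  set ℱ := Filtration.natural Z fun i => (hZ i).stronglyMeasurable
  have hint : ∀ n, Integrable (fun ω => exp (l * ∑ i ∈ range (n + 1), Z i ω)) μ := fun n =>
    (HasSubgaussianMGF.sum_of_iIndepFun hind fun i _ => hsub i).integrable_exp_mul l
  have hadapted : StronglyAdapted ℱ fun n ω => exp (l * ∑ i ∈ range (n + 1), Z i ω) := by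
    intro n
    refine Measurable.stronglyMeasurable ?_
    refine (Measurable.const_mul (Finset.measurable_sum _ fun i hi => ?_) l).exp
    exact ((Filtration.stronglyAdapted_natural _ i).mono
      (ℱ.mono (Nat.lt_succ_iff.1 (mem_range.1 hi)))).measurable
  refine submartingale_nat hadapted hint fun n => ?_
  set g : Ω → ℝ := fun ω => exp (l * Z (n + 1) ω)
  have hsplit : (fun ω => exp (l * ∑ i ∈ range (n + 1 + 1), Z i ω))
      = (fun ω => exp (l * ∑ i ∈ range (n + 1), Z i ω)) * g := by
    ext ω; simp [g, Finset.sum_range_succ _ (n + 1), mul_add, exp_add]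
  have hg_indep : μ[g | ℱ n] =ᵐ[μ] fun _ => μ[g] :=
    condExp_indep_eq ((hZ (n + 1)).comap_le) (ℱ.le n)
      (((measurable_const.mul (comap_measurable (Z (n + 1)))).exp).stronglyMeasurable)
      (hind.indep_comap_natural_of_lt (fun i => (hZ i).stronglyMeasurable) n.lt_succ_self)
  have hg_ge : 1 ≤ μ[g] :=
    one_le_mgf_of_integral_eq_zero (hsub _).integrable (hmean _) ((hsub _).integrable_exp_mul l)
  rw [hsplit]
  filter_upwards [condExp_mul_of_stronglyMeasurable_left (hadapted n) (hsplit ▸ hint (n + 1))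
    ((hsub _).integrable_exp_mul l), hg_indep] with ω h1 h2
  rw [h1, Pi.mul_apply, h2]
  exact le_mul_of_one_le_right (exp_pos _).le hg_ge

theorem measureReal_sup'_sum_range_ge_le_exp_add (hZ : ∀ i, Measurable (Z i))
    (hind : iIndepFun Z μ) (hsub : ∀ i, HasSubgaussianMGF (Z i) c μ) (hmean : ∀ i, μ[Z i] = 0)
    (n : ℕ) (t : ℝ) {l : ℝ} (hl : 0 ≤ l) :
    μ.real {ω | t ≤ (range (n + 1)).sup' nonempty_range_add_one
        fun k => ∑ i ∈ range (k + 1), Z i ω}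
      ≤ exp (-l * t + (n + 1) * c * l ^ 2 / 2) := by
  set f : ℕ → Ω → ℝ := fun k ω => exp (l * ∑ i ∈ range (k + 1), Z i ω)
  set B := {ω | exp (l * t) ≤ (range (n + 1)).sup' nonempty_range_add_one fun k => f k ω}
  have hsub_B : {ω | t ≤ (range (n + 1)).sup' nonempty_range_add_one
      fun k => ∑ i ∈ range (k + 1), Z i ω} ⊆ B := by
    intro ω hω
    obtain ⟨k, hk, htk⟩ := (Finset.le_sup'_iff _).1 (show t ≤ _ from hω)
    exact (Finset.le_sup'_iff (f := fun k => f k ω) _).2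
      ⟨k, hk, exp_le_exp.2 (mul_le_mul_of_nonneg_left htk hl)⟩
  have hsum := HasSubgaussianMGF.sum_of_iIndepFun hind (s := range (n + 1)) fun i _ => hsub i
  have hdoob := maximal_ineq (submartingale_exp_mul_sum_range hZ hind hsub hmean l)
    (fun k ω => (exp_pos _).le) (ε := ⟨exp (l * t), (exp_pos _).le⟩) n
  have hB : exp (l * t) * μ.real B ≤ exp ((n + 1) * c * l ^ 2 / 2) := by
    calc exp (l * t) * μ.real B ≤ ∫ ω in B, f n ω ∂μ := by
          have := ENNReal.toReal_mono ENNReal.ofReal_ne_top hdoob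
          rwa [ENNReal.toReal_mul, ENNReal.toReal_ofReal (setIntegral_nonneg_of_ae_restrict
            (ae_of_all _ fun ω => (exp_pos _).le))] at this
      _ ≤ ∫ ω, f n ω ∂μ := setIntegral_le_integral (hsum.integrable_exp_mul l)
          (ae_of_all _ fun ω => (exp_pos _).le)
      _ = mgf (fun ω => ∑ i ∈ range (n + 1), Z i ω) μ l := rfl
      _ ≤ exp ((n + 1) * c * l ^ 2 / 2) := by
          refine (hsum.mgf_le l).trans_eq ?_
          rw [sum_const, card_range, nsmul_eq_mul]
          push_cast
          ring
  rw [neg_mul, ← sub_eq_neg_add, exp_sub, le_div_iff₀' (exp_pos _)]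
  exact (mul_le_mul_of_nonneg_left (measureReal_mono hsub_B) (exp_pos _).le).trans hB

theorem measureReal_sup'_sum_range_ge_le (hZ : ∀ i, Measurable (Z i)) (hind : iIndepFun Z μ)
    (hsub : ∀ i, HasSubgaussianMGF (Z i) c μ) (hmean : ∀ i, μ[Z i] = 0) (n : ℕ) {t : ℝ}
    (ht : 0 ≤ t) :
    μ.real {ω | t ≤ (range (n + 1)).sup' nonempty_range_add_one
        fun k => ∑ i ∈ range (k + 1), Z i ω}
      ≤ exp (-t ^ 2 / (2 * ((n + 1) * c))) := by
  by_cases hc0 : ((n + 1) * c : ℝ) = 0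
  · rw [hc0, mul_zero, div_zero, exp_zero]
    exact measureReal_le_one
  calc _ ≤ exp (-(t / ((n + 1) * c)) * t + (n + 1) * c * (t / ((n + 1) * c)) ^ 2 / 2) :=
        measureReal_sup'_sum_range_ge_le_exp_add hZ hind hsub hmean n t (by positivity)
    _ = exp (-t ^ 2 / (2 * ((n + 1) * c))) := by congr 1; field

theorem measureReal_maxAbsPartialSum_ge_le (hZ : ∀ i, Measurable (Z i)) (hind : iIndepFun Z μ)
    (hsub : ∀ i, HasSubgaussianMGF (Z i) c μ) (hmean : ∀ i, μ[Z i] = 0) (n : ℕ) {t : ℝ}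
    (ht : 0 ≤ t) :
    μ.real {ω | t ≤ maxAbsPartialSum Z n ω} ≤ 2 * exp (-t ^ 2 / (2 * ((n + 1) * c))) := by
  have hneg := measureReal_sup'_sum_range_ge_le (Z := fun i ω => -Z i ω)
    (fun i => (hZ i).neg) (hind.comp (fun _ x => -x) fun _ => measurable_neg)
    (fun i => (hsub i).neg) (fun i => by rw [integral_neg, hmean, neg_zero]) n ht
  have hsplit : {ω | t ≤ maxAbsPartialSum Z n ω}
      ⊆ {ω | t ≤ (range (n + 1)).sup' nonempty_range_add_one
            fun k => ∑ i ∈ range (k + 1), Z i ω}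
        ∪ {ω | t ≤ (range (n + 1)).sup' nonempty_range_add_one
            fun k => ∑ i ∈ range (k + 1), -Z i ω} := by
    intro ω hω
    obtain ⟨k, hk, htk⟩ := (Finset.le_sup'_iff _).1 (show t ≤ maxAbsPartialSum Z n ω from hω)
    rcases le_abs.1 htk with h | h
    · exact Or.inl ((Finset.le_sup'_iff (f := fun k => ∑ i ∈ range (k + 1), Z i ω) _).2
        ⟨k, hk, h⟩)
    · refine Or.inr ((Finset.le_sup'_iff (f := fun k => ∑ i ∈ range (k + 1), -Z i ω) _).2
        ⟨k, hk, ?_⟩)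
      rwa [sum_neg_distrib]
  calc μ.real {ω | t ≤ maxAbsPartialSum Z n ω}
      ≤ exp (-t ^ 2 / (2 * ((n + 1) * c))) + exp (-t ^ 2 / (2 * ((n + 1) * c))) :=
        (measureReal_mono hsplit).trans ((measureReal_union_le _ _).trans
          (add_le_add (measureReal_sup'_sum_range_ge_le hZ hind hsub hmean n ht) hneg))
    _ = 2 * exp (-t ^ 2 / (2 * ((n + 1) * c))) := by ring

theorem lintegral_ofReal_rpow_maxAbsPartialSum_le (hZ : ∀ i, Measurable (Z i))
    (hind : iIndepFun Z μ) (hsub : ∀ i, HasSubgaussianMGF (Z i) c μ) (hmean : ∀ i, μ[Z i] = 0)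
    (hc : 0 < c) (n : ℕ) {p : ℝ} (hp : 2 ≤ p) :
    ∫⁻ ω, ENNReal.ofReal (maxAbsPartialSum Z n ω ^ p) ∂μ
      ≤ ENNReal.ofReal (p * ((n + 1) * c * p) ^ (p / 2)) := by
  have hs : (0 : ℝ) < (n + 1) * c := by positivity
  refine (lintegral_ofReal_rpow_le_of_measureReal_ge_le
    (measurable_maxAbsPartialSum hZ n).aemeasurable
    (ae_of_all _ (maxAbsPartialSum_nonneg Z n)) hs (by linarith)
    fun t ht => measureReal_maxAbsPartialSum_ge_le hZ hind hsub hmean n ht.le).trans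
    (ENNReal.ofReal_le_ofReal ?_)
  calc 2 * p * (2 * ((n + 1) * c)) ^ (p / 2) * Gamma (p / 2) / 2
      = p * (2 * ((n + 1) * c)) ^ (p / 2) * Gamma (p / 2) := by ring
    _ ≤ p * (2 * ((n + 1) * c)) ^ (p / 2) * (p / 2) ^ (p / 2) := by
        gcongr
        exact Gamma_le_rpow_self (by linarith)
    _ = p * ((n + 1) * c * p) ^ (p / 2) := by
        rw [mul_assoc, ← mul_rpow (by positivity) (by positivity)]
        congr 2
        ring

theorem integrable_rpow_maxAbsPartialSum (hZ : ∀ i, Measurable (Z i))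
    (hind : iIndepFun Z μ) (hsub : ∀ i, HasSubgaussianMGF (Z i) c μ) (hmean : ∀ i, μ[Z i] = 0)
    (hc : 0 < c) (n : ℕ) {p : ℝ} (hp : 2 ≤ p) :
    Integrable (fun ω => maxAbsPartialSum Z n ω ^ p) μ :=
  ⟨((measurable_maxAbsPartialSum hZ n).pow_const p).aestronglyMeasurable,
    (hasFiniteIntegral_iff_ofReal (ae_of_all _ fun ω =>
      rpow_nonneg (maxAbsPartialSum_nonneg Z n ω) p)).2
      ((lintegral_ofReal_rpow_maxAbsPartialSum_le hZ hind hsub hmean hc n hp).trans_lt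
        ENNReal.ofReal_lt_top)⟩

theorem integral_rpow_maxAbsPartialSum_le (hZ : ∀ i, Measurable (Z i))
    (hind : iIndepFun Z μ) (hsub : ∀ i, HasSubgaussianMGF (Z i) c μ) (hmean : ∀ i, μ[Z i] = 0)
    (hc : 0 < c) (n : ℕ) {p : ℝ} (hp : 2 ≤ p) :
    ∫ ω, maxAbsPartialSum Z n ω ^ p ∂μ ≤ p * ((n + 1) * c * p) ^ (p / 2) := by
  rw [integral_eq_lintegral_of_nonneg_ae
    (ae_of_all _ fun ω => rpow_nonneg (maxAbsPartialSum_nonneg Z n ω) p)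
    ((measurable_maxAbsPartialSum hZ n).pow_const p).aestronglyMeasurable]
  exact ENNReal.toReal_le_of_le_ofReal (by positivity)
    (lintegral_ofReal_rpow_maxAbsPartialSum_le hZ hind hsub hmean hc n hp)

end PartialSums

section Centred

variable {Ω : Type*} [MeasurableSpace Ω] {μ : Measure Ω} [IsProbabilityMeasure μ]
  {E : Type*} [NormedAddCommGroup E] [NormedSpace ℝ E] [CompleteSpace E]

theorem hasSubgaussianMGF_clm_sub_integral (L : E →L[ℝ] ℝ) (hL : ‖L‖ ≤ 1) {X : Ω → E}
    (hX : AEStronglyMeasurable X μ) {σ : ℝ} (hσ : ∀ᵐ ω ∂μ, ‖X ω‖ ≤ σ) :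
    HasSubgaussianMGF (fun ω => L (X ω - μ[X])) (‖σ‖₊ ^ 2) μ := by
  have hXint : Integrable X μ := Integrable.mono' (integrable_const σ) hX hσ
  have hLX : ∀ᵐ ω ∂μ, L (X ω) ∈ Set.Icc (-σ) σ := by
    filter_upwards [hσ] with ω hω
    rw [Set.mem_Icc, ← abs_le, ← Real.norm_eq_abs]
    exact (L.le_opNorm (X ω)).trans ((mul_le_of_le_one_left (norm_nonneg _) hL).trans hω)
  convert hasSubgaussianMGF_of_mem_Icc
    (L.continuous.comp_aestronglyMeasurable hX).aemeasurable hLX using 1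
  · ext ω
    rw [map_sub, L.integral_comp_comm hXint]
  · ext
    simp [sub_neg_eq_add, ← two_mul]

theorem integral_clm_sub_integral (L : E →L[ℝ] ℝ) {X : Ω → E} (hX : Integrable X μ) :
    μ[fun ω => L (X ω - μ[X])] = 0 := by
  change ∫ ω, L (X ω - μ[X]) ∂μ = 0
  rw [L.integral_comp_comm (φ := fun ω => X ω - μ[X]) (hX.sub (integrable_const _)),
    integral_sub hX (integrable_const _), integral_const]
  simp

theorem integrable_and_integral_rpow_maxAbsPartialSum_centred_le (L : ℂ →L[ℝ] ℝ)
    (hL : ‖L‖ ≤ 1) {X : ℕ → Ω → ℂ} (hX : ∀ i, Measurable (X i)) (hind : iIndepFun X μ)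
    {σ : ℝ} (hσ0 : σ ≠ 0) (hσ : ∀ i, ∀ᵐ ω ∂μ, ‖X i ω‖ ≤ σ) (n : ℕ) {p : ℝ} (hp : 2 ≤ p) :
    Integrable (fun ω => maxAbsPartialSum (fun i ω => L (X i ω - μ[X i])) n ω ^ p) μ ∧
      ∫ ω, maxAbsPartialSum (fun i ω => L (X i ω - μ[X i])) n ω ^ p ∂μ
        ≤ p * ((n + 1) * σ ^ 2 * p) ^ (p / 2) := by
  have hZ : ∀ i, Measurable fun ω => L (X i ω - μ[X i]) := fun i =>
    L.continuous.measurable.comp ((hX i).sub_const _)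
  have hind' : iIndepFun (fun i ω => L (X i ω - μ[X i])) μ :=
    hind.comp (fun i (z : ℂ) => L (z - ∫ ω, X i ω ∂μ)) fun i => L.continuous.measurable.comp
      (measurable_id.sub_const _)
  have hsub : ∀ i, HasSubgaussianMGF (fun ω => L (X i ω - μ[X i])) (‖σ‖₊ ^ 2) μ := fun i =>
    hasSubgaussianMGF_clm_sub_integral L hL (hX i).aestronglyMeasurable (hσ i)
  have hmean : ∀ i, μ[fun ω => L (X i ω - μ[X i])] = 0 := fun i =>
    integral_clm_sub_integral L (Integrable.mono' (integrable_const σ)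
      (hX i).aestronglyMeasurable (hσ i))
  have hc : 0 < ‖σ‖₊ ^ 2 := pow_pos (nnnorm_pos.2 hσ0) 2
  have hcσ : ((‖σ‖₊ ^ 2 : ℝ≥0) : ℝ) = σ ^ 2 := by simp
  refine ⟨integrable_rpow_maxAbsPartialSum hZ hind' hsub hmean hc n hp, ?_⟩
  simpa only [hcσ] using integral_rpow_maxAbsPartialSum_le hZ hind' hsub hmean hc n hp

theorem integral_sSup_norm_sum_Ico_rpow_le {X : ℕ → Ω → ℂ} (hX : ∀ i, Measurable (X i))
    (hind : iIndepFun X μ) {v : ℝ} (hv0 : 0 < v) (hv : ∀ i, ∀ᵐ ω ∂μ, ‖X i ω‖ ^ 2 ≤ v) (n : ℕ)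
    {p : ℝ} (hp : 2 ≤ p) :
    ∫ ω, sSup {r : ℝ | ∃ u w : ℕ, u ≤ w ∧ w ≤ n + 1 ∧
        r = ‖∑ i ∈ Ico u w, (X i ω - μ[X i])‖ ^ p} ∂μ
      ≤ 4 ^ p * p * ((n + 1) * v * p) ^ (p / 2) := by
  have hσ : ∀ i, ∀ᵐ ω ∂μ, ‖X i ω‖ ≤ √v := fun i => by
    filter_upwards [hv i] with ω h using (le_abs_self _).trans (abs_le_sqrt h)
  have hσ0 : √v ≠ 0 := (sqrt_pos.2 hv0).ne'
  obtain ⟨hre_int, hre⟩ := integrable_and_integral_rpow_maxAbsPartialSum_centred_le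
    Complex.reCLM (by simp) hX hind hσ0 hσ n hp
  obtain ⟨him_int, him⟩ := integrable_and_integral_rpow_maxAbsPartialSum_centred_le
    Complex.imCLM (by simp) hX hind hσ0 hσ n hp
  rw [sq_sqrt hv0.le] at hre him
  have hdom := sSup_norm_sum_Ico_rpow_le (fun i ω => X i ω - μ[X i]) n (p := p) (by linarith)
  calc _ ≤ ∫ ω, 2 ^ p * 2 ^ (p - 1) *
        (maxAbsPartialSum (fun i ω => Complex.reCLM (X i ω - μ[X i])) n ω ^ p
          + maxAbsPartialSum (fun i ω => Complex.imCLM (X i ω - μ[X i])) n ω ^ p) ∂μ :=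
        integral_mono_of_nonneg (ae_of_all _ fun ω => Real.sSup_nonneg
          (by rintro r ⟨u, w, -, -, rfl⟩; positivity))
          ((hre_int.add him_int).const_mul _)
          (ae_of_all _ hdom)
    _ ≤ 2 ^ p * 2 ^ (p - 1) * (2 * (p * ((n + 1) * v * p) ^ (p / 2))) := by
        rw [integral_const_mul, integral_add hre_int him_int]
        gcongr
        linarith
    _ = 4 ^ p * p * ((n + 1) * v * p) ^ (p / 2) := by
        rw [show (4 : ℝ) = 2 * 2 by norm_num, mul_rpow zero_le_two zero_le_two,
          rpow_sub_one two_ne_zero]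
        ring

end Centred

theorem ae_mem_range_of_measure_eq_card_div {Ω : Type*} [MeasurableSpace Ω] {μ : Measure Ω}
    {E : Type*} [MeasurableSpace E] [MeasurableSingletonClass E] {m : ℕ} {c : Fin m → E}
    {Y : Ω → E} (hY : ∀ s : Set E, MeasurableSet s →
      μ {ω | Y ω ∈ s} = (Nat.card {u : Fin m // c u ∈ s} : ℝ≥0∞) / (m : ℝ≥0∞)) :
    ∀ᵐ ω ∂μ, Y ω ∈ Set.range c := by
  have : IsEmpty {u : Fin m // c u ∈ (Set.range c)ᶜ} := ⟨fun u => u.2 ⟨u.1, rfl⟩⟩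
  rw [ae_iff]
  simpa [Nat.card_of_isEmpty] using hY _ (Set.finite_range c).measurableSet.compl

theorem max_interval_sum_moment_bound :
    ∃ C : ℝ, 0 < C ∧ ∀ (j m : ℕ), 0 < m → ∀ c : Fin m → ℂ,
      (∀ u : Fin m, (2:ℝ) ^ (-(j:ℝ) - 1) < ‖c u‖ ^ 2 ∧ ‖c u‖ ^ 2 ≤ (2:ℝ) ^ (-(j:ℝ))) →
      ∀ (Ω : Type) (_ : MeasurableSpace Ω) (μ : Measure Ω),
        IsProbabilityMeasure μ →
      ∀ X : ℕ → Ω → ℂ, (∀ i, Measurable (X i)) →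
        iIndepFun 
          (fun i : {i : ℕ // 1 ≤ i} => X i.val) μ →
        (∀ i : ℕ, 1 ≤ i → ∀ s : Set ℂ, MeasurableSet s →
          μ {ω | X i ω ∈ s} = (Nat.card {u : Fin m // c u ∈ s} : ENNReal) / (m : ENNReal)) →
        ∀ k : ℕ, 1 ≤ k → ∀ p : ℝ, 2 < p →
          (∫ ω, sSup { r : ℝ | ∃ u v : ℕ, u ≤ v ∧ v ≤ k ∧
              r = ‖∑ i ∈ Finset.Ioc u v, (X i ω - ∫ ω', X i ω' ∂μ)‖ ^ p } ∂μ)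
            ≤ C ^ p * (k : ℝ) ^ (p / 2) * p ^ (p / 2) * (2:ℝ) ^ (-(j:ℝ) * p / 2) := by
  refine ⟨8, by norm_num, ?_⟩
  intro j m _ c hc Ω _ μ _ X hX hind hdist k hk p hp
  obtain ⟨n, rfl⟩ : ∃ n, k = n + 1 := ⟨k - 1, by omega⟩
  have hv : ∀ i, ∀ᵐ ω ∂μ, ‖X (i + 1) ω‖ ^ 2 ≤ (2 : ℝ) ^ (-(j : ℝ)) := fun i => by
    filter_upwards [ae_mem_range_of_measure_eq_card_div (hdist (i + 1) (by omega))]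
      with ω ⟨u, hu⟩
    exact hu ▸ (hc u).2
  have hind' : iIndepFun (fun i => X (i + 1)) μ :=
    hind.precomp (g := fun i => (⟨i + 1, by omega⟩ : {i : ℕ // 1 ≤ i})) fun a b h => by
      simpa using congrArg Subtype.val h
  simp_rw [sum_Ioc_eq_sum_Ico_add_one]
  calc _ ≤ 4 ^ p * p * ((n + 1) * 2 ^ (-(j : ℝ)) * p) ^ (p / 2) :=
        integral_sSup_norm_sum_Ico_rpow_le (fun i => hX _) hind' (by positivity) hv n hp.le
    _ ≤ 4 ^ p * 2 ^ p * ((n + 1) * 2 ^ (-(j : ℝ)) * p) ^ (p / 2) := by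
        gcongr; exact self_le_two_rpow (by linarith)
    _ = _ := by
        have h8 : (8 : ℝ) ^ p = 4 ^ p * 2 ^ p := by
          rw [← mul_rpow (by norm_num) (by norm_num)]; norm_num
        have hsplit : ((n + 1) * (2 : ℝ) ^ (-(j : ℝ)) * p) ^ (p / 2)
            = (n + 1) ^ (p / 2) * p ^ (p / 2) * 2 ^ (-(j : ℝ) * p / 2) := by
          rw [mul_rpow (by positivity) (by positivity), mul_rpow (by positivity) (by positivity),
            ← rpow_mul zero_le_two, mul_div_assoc]
          ring
        rw [h8, hsplit]
        push_cast
        ring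
end
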